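/- arXiv:2212.11250 — 4 statements merged into one kernel-verified Lean document; each statement's English description precedes it below -/
import Mathlib

section
/- For every n ≥ 1, d(n, 1) = A_{n−1}(3, 2), where d(n, 1) is the number of compatible pairs (O_a, O_m) of transfer systems on [n] with O_a wrapped; equivalently, (3(n − 1) + 2) · d(n, 1) = 2 · C(3(n − 1) + 2, n − 1). -/
/-- A transfer system on `[n] = {1, …, n}`, encoded as a relation on `ℕ`
supported on pairs `1 ≤ i ≤ j ≤ n`: reflexive on `{1, …, n}`, transitive,
contained in `≤`, and closed under restriction. For `n = 0` this forces the
empty relation. -/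
def IsTransferSystem (n : ℕ) (R : ℕ → ℕ → Prop) : Prop :=
  (∀ i, 1 ≤ i → i ≤ n → R i i) ∧
  (∀ i j k, R i j → R j k → R i k) ∧
  (∀ i j, R i j → 1 ≤ i ∧ i ≤ j ∧ j ≤ n) ∧
  (∀ i j k, R i j → i ≤ k → k ≤ j → R i k)

/-- `(O_a, O_m)` is compatible: whenever `i →_{O_m} j` and `i ≤ k ≤ j`, then `k →_{O_a} j`. -/
def Compatible (Ra Rm : ℕ → ℕ → Prop) : Prop :=
  ∀ i j k, Rm i j → i ≤ k → k ≤ j → Ra k j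

/-- Concatenation `O_L ⊕ O_R` of a transfer system on `[k]` with one on `[n-k]`. -/
def concatTS (k : ℕ) (RL RR : ℕ → ℕ → Prop) : ℕ → ℕ → Prop :=
  fun i j => (j ≤ k ∧ RL i j) ∨ (k + 1 ≤ i ∧ RR (i - k) (j - k))

/-- The restriction `i_k^* O` to `[k]`. -/
def restrictTS (k : ℕ) (R : ℕ → ℕ → Prop) : ℕ → ℕ → Prop :=
  fun i j => j ≤ k ∧ R i j

/-- The geometric fixed points `Φ^k O`, a relation on `[n - k]`. -/
def gfpTS (k : ℕ) (R : ℕ → ℕ → Prop) : ℕ → ℕ → Prop :=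
  fun i j => 1 ≤ i ∧ R (i + k) (j + k)

/-- The wrapping `w(O)` of a transfer system on `[n]`, a transfer system on `[n+1]`:
`i → j` iff `i = 1` (and `j` is in range) or `2 ≤ i ≤ j` and `(i-1) →_O (j-1)`. -/
def wrapTS (n : ℕ) (R : ℕ → ℕ → Prop) : ℕ → ℕ → Prop :=
  fun i j => (i = 1 ∧ 1 ≤ j ∧ j ≤ n + 1) ∨ (2 ≤ i ∧ i ≤ j ∧ R (i - 1) (j - 1))

/-- The complete transfer system on `[n]`. -/
def completeTS (n : ℕ) : ℕ → ℕ → Prop :=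
  fun i j => 1 ≤ i ∧ i ≤ j ∧ j ≤ n

/-- The concatenation `O_{k_1}^cpt ⊕ … ⊕ O_{k_r}^cpt` of complete transfer systems. -/
def concatCompletes : List ℕ → (ℕ → ℕ → Prop)
  | [] => fun _ _ => False
  | k :: L => concatTS k (completeTS k) (concatCompletes L)

/-- A transfer system on `[n]` is saturated if it is a concatenation of complete
transfer systems `O_{k_1}^cpt ⊕ … ⊕ O_{k_r}^cpt` with the `k_i` positive and summing to `n`. -/
def IsSaturated (n : ℕ) (R : ℕ → ℕ → Prop) : Prop :=
  ∃ L : List ℕ, (∀ k ∈ L, 0 < k) ∧ L.sum = n ∧ R = concatCompletes L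

/-- The core of a transfer system on `[n]`: `i → j` iff `m →_O (m+1)` for every
`i ≤ m < j` (for `i, j` in range). -/
def coreTS (n : ℕ) (R : ℕ → ℕ → Prop) : ℕ → ℕ → Prop :=
  fun i j => 1 ≤ i ∧ i ≤ j ∧ j ≤ n ∧ ∀ m, i ≤ m → m < j → R m (m + 1)

/-- `wpow m i R` is the `i`-fold wrapping `w^i(R)` of a transfer system `R` on `[m]`,
a transfer system on `[m + i]`. -/
def wpow (m : ℕ) : ℕ → (ℕ → ℕ → Prop) → (ℕ → ℕ → Prop)
  | 0, R => R
  | i + 1, R => wrapTS (m + i) (wpow m i R)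

/-- `d(n, 1)`: the number of compatible pairs `(O_a, O_m)` of transfer systems on `[n]`
with `O_a` wrapped, i.e. `1 →_{O_a} n`. -/
noncomputable def dWrapped (n : ℕ) : ℕ :=
  Nat.card {p : (ℕ → ℕ → Prop) × (ℕ → ℕ → Prop) //
    IsTransferSystem n p.1 ∧ IsTransferSystem n p.2 ∧ Compatible p.1 p.2 ∧ p.1 1 n}


namespace FCaux
open Finset


/-- Integer binomial coefficient. -/
def chz (a b : ℕ) : ℤ := (Nat.choose a b : ℤ)

/-- Fuss–Catalan `A_m(3, r) = C(3m+r, m) - 3 C(3m+r-1, m-1)`. -/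
def Az : ℕ → ℕ → ℤ
  | 0, _ => 1
  | m + 1, r => chz (3 * m + 3 + r) (m + 1) - 3 * chz (3 * m + 2 + r) m

lemma Az_def_succ (m r : ℕ) :
    Az (m + 1) r = chz (3 * m + 3 + r) (m + 1) - 3 * chz (3 * m + 2 + r) m := rfl

lemma chz_pascal (a b : ℕ) : chz (a + 1) (b + 1) = chz a b + chz a (b + 1) := by
  unfold chz
  exact_mod_cast congrArg (Nat.cast : ℕ → ℤ) (Nat.choose_succ_succ a b)

/-- `C(3m+3, m+1) = 3 C(3m+2, m)`. -/
lemma choose_3m3 (m : ℕ) : Nat.choose (3 * m + 3) (m + 1) = 3 * Nat.choose (3 * m + 2) m := by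
  have h := Nat.add_one_mul_choose_eq (3 * m + 2) m
  have h2 : (3 * m + 2).succ = 3 * m + 3 := rfl
  have h3 : m.succ = m + 1 := rfl
  rw [show 3 * m + 2 + 1 = 3 * m + 3 from rfl] at h
  have key : (3 * Nat.choose (3 * m + 2) m) * (m + 1) = Nat.choose (3 * m + 3) (m + 1) * (m + 1) := by
    rw [← h]; ring
  exact (Nat.eq_of_mul_eq_mul_right (Nat.succ_pos m) key).symm

lemma Az_zero_succ (m : ℕ) : Az (m + 1) 0 = 0 := by
  show chz (3 * m + 3 + 0) (m + 1) - 3 * chz (3 * m + 2 + 0) m = 0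
  simp [chz, choose_3m3]

lemma Az_zero_left (r : ℕ) : Az 0 r = 1 := rfl

lemma Az_rec_core (b m : ℕ) : chz (b + 4) (m + 2) - 3 * chz (b + 3) (m + 1)
    = (chz (b + 3) (m + 2) - 3 * chz (b + 2) (m + 1)) + (chz (b + 3) (m + 1) - 3 * chz (b + 2) m) := by
  have p1 := chz_pascal (b + 3) (m + 1)
  have p2 := chz_pascal (b + 2) m
  have e1 : b + 3 + 1 = b + 4 := by ring
  have e2 : m + 1 + 1 = m + 2 := by ring
  have e3 : b + 2 + 1 = b + 3 := by ring
  have e4 : m + 0 + 1 = m + 1 := by ring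
  rw [e1, e2] at p1
  rw [e3] at p2
  linarith

lemma Az_rec (m r : ℕ) : Az (m + 1) (r + 1) = Az (m + 1) r + Az m (r + 3) := by
  cases m with
  | zero =>
      show chz (3 * 0 + 3 + (r + 1)) 1 - 3 * chz (3 * 0 + 2 + (r + 1)) 0
        = (chz (3 * 0 + 3 + r) 1 - 3 * chz (3 * 0 + 2 + r) 0) + 1
      simp only [chz, Nat.choose_one_right, Nat.choose_zero_right]
      push_cast; ring
  | succ m =>
      show chz (3 * (m + 1) + 3 + (r + 1)) (m + 2) - 3 * chz (3 * (m + 1) + 2 + (r + 1)) (m + 1)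
        = (chz (3 * (m + 1) + 3 + r) (m + 2) - 3 * chz (3 * (m + 1) + 2 + r) (m + 1))
          + (chz (3 * m + 3 + (r + 3)) (m + 1) - 3 * chz (3 * m + 2 + (r + 3)) m)
      have e1 : 3 * (m + 1) + 3 + (r + 1) = (3 * m + 3 + r) + 4 := by ring
      have e2 : 3 * (m + 1) + 2 + (r + 1) = (3 * m + 3 + r) + 3 := by ring
      have e3 : 3 * (m + 1) + 3 + r = (3 * m + 3 + r) + 3 := by ring
      have e4 : 3 * (m + 1) + 2 + r = (3 * m + 3 + r) + 2 := by ring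
      have e5 : 3 * m + 3 + (r + 3) = (3 * m + 3 + r) + 3 := by ring
      have e6 : 3 * m + 2 + (r + 3) = (3 * m + 3 + r) + 2 := by ring
      rw [e1, e2, e3, e4, e5, e6]
      exact Az_rec_core (3 * m + 3 + r) m

lemma Az_conv : ∀ n r s : ℕ, (∑ k ∈ range (n + 1), Az k r * Az (n - k) s) = Az n (r + s) := by
  intro n
  induction n using Nat.strong_induction_on with
  | _ n ih =>
    match n with
    | 0 => intro r s; simp [Az]
    | (n + 1) =>
      intro r
      induction r with
      | zero =>
          intro s
          rw [Finset.sum_eq_single 0]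
          · simp [Az]
          · intro k hk hk0
            match k, hk0 with
            | (k + 1), _ => simp [Az_zero_succ]
          · intro h; simp at h
      | succ r ihr =>
          intro s
          have peel : (∑ k ∈ range (n + 2), Az k (r + 1) * Az (n + 1 - k) s)
              = (∑ k ∈ range (n + 1), Az (k + 1) (r + 1) * Az (n - k) s)
                + Az 0 (r + 1) * Az (n + 1) s := by
            rw [Finset.sum_range_succ' (fun k => Az k (r + 1) * Az (n + 1 - k) s) (n + 1)]
            simp [Nat.succ_sub_succ]
          rw [peel]
          have step : (∑ k ∈ range (n + 1), Az (k + 1) (r + 1) * Az (n - k) s)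
              = (∑ k ∈ range (n + 1), Az (k + 1) r * Az (n - k) s)
                + (∑ k ∈ range (n + 1), Az k (r + 3) * Az (n - k) s) := by
            rw [← Finset.sum_add_distrib]
            refine Finset.sum_congr rfl fun k _ => ?_
            rw [Az_rec]; ring
          rw [step]
          have h2 : (∑ k ∈ range (n + 1), Az k (r + 3) * Az (n - k) s) = Az n (r + 3 + s) :=
            ih n (Nat.lt_succ_self n) (r + 3) s
          have h1 : (∑ k ∈ range (n + 1), Az (k + 1) r * Az (n - k) s) + Az 0 r * Az (n + 1) s
              = Az (n + 1) (r + s) := by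
            have := ihr s
            rw [Finset.sum_range_succ' (fun k => Az k r * Az (n + 1 - k) s) (n + 1)] at this
            simpa [Nat.succ_sub_succ] using this
          have h0 : Az 0 (r + 1) = Az 0 r := rfl
          rw [h0, h2]
          have hrec := Az_rec n (r + s)
          have er : r + s + 3 = r + 3 + s := by ring
          have eg : r + 1 + s = r + s + 1 := by ring
          rw [er] at hrec
          rw [eg, hrec]
          linarith


/-- Ballot numbers (Catalan's triangle): `T(r,s) = C(r+s,s) - C(r+s,s-1)`. -/
def Tz : ℕ → ℕ → ℤ
  | _, 0 => 1
  | r, s + 1 => chz (r + s + 1) (s + 1) - chz (r + s + 1) s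

lemma Tz_zero (r : ℕ) : Tz r 0 = 1 := rfl

lemma Tz_partial (r : ℕ) : ∀ j, (∑ s ∈ range (j + 1), Tz r s) = Tz (r + 1) j := by
  intro j
  induction j with
  | zero => simp [Tz]
  | succ j ihj =>
      rw [Finset.sum_range_succ, ihj]
      cases j with
      | zero =>
          show (1 : ℤ) + (chz (r + 0 + 1) 1 - chz (r + 0 + 1) 0) = chz (r + 1 + 0 + 1) 1 - chz (r + 1 + 0 + 1) 0
          simp [chz, Nat.choose_one_right]
          push_cast; ring
      | succ j =>
          show (chz (r + 1 + j + 1) (j + 1) - chz (r + 1 + j + 1) j)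
              + (chz (r + j + 1 + 1) (j + 2) - chz (r + j + 1 + 1) (j + 1))
            = chz (r + 1 + j + 1 + 1) (j + 2) - chz (r + 1 + j + 1 + 1) (j + 1)
          have e1 : r + 1 + j + 1 = (r + j + 1) + 1 := by ring
          rw [e1]
          have p1 := chz_pascal ((r + j + 1) + 1) (j + 1)
          have p2 := chz_pascal ((r + j + 1) + 1) j
          have e4 : j + 1 + 1 = j + 2 := by ring
          rw [e4] at p1
          linarith

lemma Tz_top (r : ℕ) : Tz r (r + 1) = 0 := by
  show chz (r + r + 1) (r + 1) - chz (r + r + 1) r = 0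
  have h : Nat.choose (r + r + 1) (r + 1) = Nat.choose (r + r + 1) r := by
    have := Nat.choose_symm (n := r + r + 1) (k := r + 1) (by omega)
    have e : r + r + 1 - (r + 1) = r := by omega
    rw [e] at this
    exact this.symm
  simp [chz, h]

lemma Az_telescope (m : ℕ) : ∀ r, Az (m + 1) r = ∑ q ∈ range r, Az m (q + 3) := by
  intro r
  induction r with
  | zero => simpa using Az_zero_succ m
  | succ r ihr => rw [Finset.sum_range_succ, ← ihr, Az_rec]

lemma Tz_diag_catalan (n : ℕ) : ((catalan n : ℕ) : ℤ) = Tz n n := by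
  cases n with
  | zero => simp [Tz]
  | succ s =>
      have hcb := succ_mul_catalan_eq_centralBinom (s + 1)
      have hcb' : ((s + 2 : ℕ) : ℤ) * (catalan (s + 1) : ℤ) = ((2 * s + 2).choose (s + 1) : ℤ) := by
        have : Nat.centralBinom (s + 1) = (2 * (s + 1)).choose (s + 1) := rfl
        rw [this] at hcb
        exact_mod_cast congrArg (Nat.cast : ℕ → ℤ) hcb
      have hch := Nat.choose_succ_right_eq (2 * s + 2) s
      -- C(2s+2, s+1) * (s+1) = C(2s+2, s) * (s+2)
      have hch' : ((2 * s + 2).choose (s + 1) : ℤ) * (s + 1) = ((2 * s + 2).choose s : ℤ) * (s + 2) := by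
        have e : 2 * s + 2 - s = s + 2 := by omega
        rw [e] at hch
        exact_mod_cast congrArg (Nat.cast : ℕ → ℤ) hch
      show ((catalan (s + 1) : ℕ) : ℤ) = chz (s + 1 + s + 1) (s + 1) - chz (s + 1 + s + 1) s
      have e2 : s + 1 + s + 1 = 2 * s + 2 := by ring
      rw [e2]
      have hpos : ((s + 2 : ℕ) : ℤ) ≠ 0 := by positivity
      apply mul_left_cancel₀ hpos
      push_cast [chz] at *
      nlinarith [hcb', hch']

/-- `Ψ_0(m) = A_m(3,1)`, `Ψ_{i+1}(m) = ∑_{s ≤ i} T(i,s) A_m(3, i+2-s)`. -/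
def Psi : ℕ → ℕ → ℤ
  | 0, m => Az m 1
  | i + 1, m => ∑ s ∈ range (i + 1), Tz i s * Az m (i + 2 - s)

lemma Psi_zero (i : ℕ) : Psi i 0 = (catalan i : ℤ) := by
  cases i with
  | zero => simp [Psi, Az_zero_left]
  | succ i =>
      show (∑ s ∈ range (i + 1), Tz i s * Az 0 (i + 2 - s)) = _
      have h1 : (∑ s ∈ range (i + 1), Tz i s * Az 0 (i + 2 - s)) = ∑ s ∈ range (i + 1), Tz i s := by
        refine Finset.sum_congr rfl fun s _ => ?_
        rw [Az_zero_left, mul_one]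
      rw [h1, Tz_partial, Tz_diag_catalan]
      -- Tz (i+1) i = Tz (i+1) (i+1)
      have h2 := Tz_partial i (i + 1)
      rw [Finset.sum_range_succ, Tz_partial, Tz_top] at h2
      rw [← h2]; ring

lemma chz_3m3 (k : ℕ) : chz (3 * k + 3) (k + 1) = 3 * chz (3 * k + 2) k := by
  unfold chz; exact_mod_cast congrArg (Nat.cast : ℕ → ℤ) (choose_3m3 k)

lemma L1 (m : ℕ) : Az (m + 1) 1 = Az m 3 := by
  cases m with
  | zero =>
      rw [Az_def_succ, Az_zero_left]
      norm_num [chz]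
  | succ m =>
      rw [Az_def_succ, Az_def_succ]
      have e1 : 3 * (m + 1) + 3 + 1 = (3 * m + 6) + 1 := by ring
      have e2 : 3 * (m + 1) + 2 + 1 = 3 * m + 6 := by ring
      have e3 : 3 * m + 3 + 3 = 3 * m + 6 := by ring
      have e4 : 3 * m + 2 + 3 = 3 * m + 5 := by ring
      rw [e1, e2, e3, e4]
      have P := chz_pascal (3 * m + 6) (m + 1)
      have Q : chz (3 * m + 6) (m + 2) = 3 * chz (3 * m + 5) (m + 1) := by
        have := chz_3m3 (m + 1)
        have f1 : 3 * (m + 1) + 3 = 3 * m + 6 := by ring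
        have f2 : 3 * (m + 1) + 2 = 3 * m + 5 := by ring
        rw [f1, f2] at this; exact this
      have R := chz_pascal (3 * m + 5) m
      have g1 : 3 * m + 5 + 1 = 3 * m + 6 := by ring
      have g2 : m + 1 + 1 = m + 2 := by ring
      rw [g2] at P
      rw [g1] at R
      linarith

/-- Triangular double-sum exchange. -/
lemma sum_tri (n : ℕ) (f : ℕ → ℕ → ℤ) :
    (∑ s ∈ range n, ∑ t ∈ range (n - s), f s t)
      = ∑ t ∈ range n, ∑ s ∈ range (n - t), f s t := by
  have key : ∀ g : ℕ → ℕ → ℤ, (∑ s ∈ range n, ∑ t ∈ range (n - s), g s t)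
      = ∑ s ∈ range n, ∑ t ∈ range n, if s + t < n then g s t else 0 := by
    intro g
    refine Finset.sum_congr rfl fun s hs => ?_
    have e : range (n - s) = (range n).filter (fun t => s + t < n) := by
      ext t; simp only [Finset.mem_filter, Finset.mem_range]; omega
    rw [e, Finset.sum_filter]
  rw [key f, key (fun t s => f s t), Finset.sum_comm]
  refine Finset.sum_congr rfl fun t _ => Finset.sum_congr rfl fun s _ => ?_
  rw [Nat.add_comm s t]

lemma Psi_succ_def (i m : ℕ) : Psi (i + 1) m = ∑ s ∈ range (i + 1), Tz i s * Az m (i + 2 - s) := rfl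

lemma AR (i m : ℕ) : Psi i (m + 1) = ∑ a ∈ range (m + 1), Psi (i + 1) a * Az (m - a) 1 := by
  cases i with
  | zero =>
      have h1 : ∀ a, Psi 1 a = Az a 2 := by
        intro a
        rw [Psi_succ_def]
        simp [Tz_zero]
      have h2 : Psi 0 (m + 1) = Az m 3 := L1 m
      rw [h2, ← Az_conv m 2 1]
      refine Finset.sum_congr rfl fun a _ => ?_
      rw [h1]
  | succ i =>
      rw [Psi_succ_def]
      calc (∑ s ∈ range (i + 1), Tz i s * Az (m + 1) (i + 2 - s))
          = ∑ s ∈ range (i + 2), Tz i s * Az (m + 1) (i + 2 - s) := by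
            have h := Finset.sum_range_succ (fun s => Tz i s * Az (m + 1) (i + 2 - s)) (i + 1)
            have e : i + 1 + 1 = i + 2 := by ring
            rw [e] at h
            rw [h, Tz_top, zero_mul, add_zero]
        _ = ∑ s ∈ range (i + 2), ∑ q ∈ range (i + 2 - s), Tz i s * Az m (q + 3) := by
            refine Finset.sum_congr rfl fun s _ => ?_
            rw [Az_telescope m (i + 2 - s), Finset.mul_sum]
        _ = ∑ q ∈ range (i + 2), ∑ s ∈ range (i + 2 - q), Tz i s * Az m (q + 3) :=
            sum_tri (i + 2) (fun s q => Tz i s * Az m (q + 3))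
        _ = ∑ q ∈ range (i + 2), Tz (i + 1) (i + 1 - q) * Az m (q + 3) := by
            refine Finset.sum_congr rfl fun q hq => ?_
            have hq' : q < i + 2 := Finset.mem_range.mp hq
            have e : i + 2 - q = (i + 1 - q) + 1 := by omega
            rw [e, ← Finset.sum_mul, Tz_partial]
        _ = ∑ s ∈ range (i + 2), Tz (i + 1) s * Az m (i + 4 - s) := by
            rw [← Finset.sum_range_reflect (fun s => Tz (i + 1) s * Az m (i + 4 - s)) (i + 2)]
            refine Finset.sum_congr rfl fun q hq => ?_
            have hq' : q < i + 2 := Finset.mem_range.mp hq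
            show Tz (i + 1) (i + 1 - q) * Az m (q + 3)
              = Tz (i + 1) (i + 2 - 1 - q) * Az m (i + 4 - (i + 2 - 1 - q))
            have e1 : i + 2 - 1 - q = i + 1 - q := by omega
            have e2 : i + 4 - (i + 1 - q) = q + 3 := by omega
            rw [e1, e2]
        _ = ∑ s ∈ range (i + 2), Tz (i + 1) s * ∑ a ∈ range (m + 1), Az a (i + 3 - s) * Az (m - a) 1 := by
            refine Finset.sum_congr rfl fun s hs => ?_
            have hs' : s < i + 2 := Finset.mem_range.mp hs
            have e : i + 4 - s = (i + 3 - s) + 1 := by omega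
            rw [e, Az_conv m (i + 3 - s) 1]
        _ = ∑ a ∈ range (m + 1), Psi (i + 2) a * Az (m - a) 1 := by
            simp only [Finset.mul_sum]
            rw [Finset.sum_comm]
            refine Finset.sum_congr rfl fun a _ => ?_
            rw [Psi_succ_def, Finset.sum_mul]
            refine Finset.sum_congr rfl fun s _ => ?_
            have e : i + 1 + 2 - s = i + 3 - s := by omega
            rw [e]; ring

lemma final_arith (m : ℕ) : ((3 * m + 2 : ℕ) : ℤ) * Az m 2 = 2 * chz (3 * m + 2) m := by
  cases m with
  | zero => norm_num [Az_zero_left, chz]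
  | succ m =>
      rw [Az_def_succ]
      have e1 : 3 * m + 3 + 2 = 3 * (m + 1) + 2 := by ring
      have e2 : 3 * m + 2 + 2 = 3 * m + 4 := by ring
      rw [e1, e2]
      have h := Nat.add_one_mul_choose_eq (3 * m + 4) m
      have h' : ((3 * m + 5 : ℕ) : ℤ) * chz (3 * m + 4) m = chz (3 * m + 5) (m + 1) * ((m + 1 : ℕ) : ℤ) := by
        unfold chz
        have h2 : (3 * m + 4).succ = 3 * m + 5 := rfl
        have h3 : m.succ = m + 1 := rfl
        rw [show 3 * m + 4 + 1 = 3 * m + 5 from rfl] at h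
        exact_mod_cast congrArg (Nat.cast : ℕ → ℤ) h
      have e3 : 3 * (m + 1) + 2 = 3 * m + 5 := by ring
      rw [e3]
      push_cast at h' ⊢
      linarith

-- ######## basics

/-- Rows `1..i` of `R` are full (as a transfer system on `[n]`). -/
def FullRows (i n : ℕ) (R : ℕ → ℕ → Prop) : Prop := ∀ p, 1 ≤ p → p ≤ i → R p n

/-- Compatible pairs on `[n]` whose first component has rows `1..i` full. -/
def PairT (i n : ℕ) : Type :=
  {p : (ℕ → ℕ → Prop) × (ℕ → ℕ → Prop) //
    IsTransferSystem n p.1 ∧ IsTransferSystem n p.2 ∧ Compatible p.1 p.2 ∧ FullRows i n p.1}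

/-- Transfer systems on `[n]`. -/
def TST (n : ℕ) : Type := {R : ℕ → ℕ → Prop // IsTransferSystem n R}

theorem rel_ext {R S : ℕ → ℕ → Prop} (h : ∀ p l, R p l ↔ S p l) : R = S :=
  funext fun p => funext fun l => propext (h p l)

theorem TS_complete (n : ℕ) : IsTransferSystem n (completeTS n) := by
  refine ⟨fun i h1 h2 => ⟨h1, le_refl _, h2⟩, ?_, ?_, ?_⟩ <;>
    · intros; unfold completeTS at *; omega

theorem TS_restrict {n : ℕ} {R} (hR : IsTransferSystem n R) (k : ℕ) (hk : k ≤ n) :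
    IsTransferSystem k (restrictTS k R) := by
  obtain ⟨h1, h2, h3, h4⟩ := hR
  refine ⟨fun i hi1 hi2 => ⟨hi2, h1 i hi1 (le_trans hi2 hk)⟩,
    fun i j l ⟨hj, hij⟩ ⟨hl, hjl⟩ => ⟨hl, h2 i j l hij hjl⟩,
    fun i j ⟨hj, hij⟩ => ?_,
    fun i j l ⟨hj, hij⟩ hil hlj => ⟨le_trans hlj hj, h4 i j l hij hil hlj⟩⟩
  have := h3 i j hij; omega

theorem TS_gfp {n : ℕ} {R} (hR : IsTransferSystem n R) (k : ℕ) :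
    IsTransferSystem (n - k) (gfpTS k R) := by
  obtain ⟨h1, h2, h3, h4⟩ := hR
  refine ⟨fun i hi1 hi2 => ⟨hi1, h1 (i + k) (by omega) (by omega)⟩,
    fun i j l ⟨hi, hij⟩ ⟨hj, hjl⟩ => ⟨hi, h2 _ _ _ hij hjl⟩,
    fun i j ⟨hi, hij⟩ => ?_,
    fun i j l ⟨hi, hij⟩ hil hlj => ⟨by omega, h4 _ _ (l + k) hij (by omega) (by omega)⟩⟩
  have := h3 _ _ hij; omega

theorem TS_concat {k m : ℕ} {L R} (hL : IsTransferSystem k L) (hR : IsTransferSystem m R) :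
    IsTransferSystem (k + m) (concatTS k L R) := by
  obtain ⟨l1, l2, l3, l4⟩ := hL
  obtain ⟨r1, r2, r3, r4⟩ := hR
  refine ⟨?_, ?_, ?_, ?_⟩
  · intro i hi1 hi2
    rcases le_or_gt i k with h | h
    · exact Or.inl ⟨h, l1 i hi1 h⟩
    · exact Or.inr ⟨h, r1 (i - k) (by omega) (by omega)⟩
  · rintro i j l (⟨hj, hij⟩ | ⟨hi, hij⟩) (⟨hl, hjl⟩ | ⟨hj2, hjl⟩)
    · exact Or.inl ⟨hl, l2 _ _ _ hij hjl⟩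
    · -- j ≤ k and k+1 ≤ j: contradiction via ranges
      have := r3 _ _ hjl; omega
    · -- first right, second left: ranges contradict
      have := r3 _ _ hij
      have := l3 _ _ hjl
      omega
    · exact Or.inr ⟨hi, r2 _ _ _ hij hjl⟩
  · rintro i j (⟨hj, hij⟩ | ⟨hi, hij⟩)
    · have := l3 _ _ hij; omega
    · have := r3 _ _ hij; omega
  · rintro i j l (⟨hj, hij⟩ | ⟨hi, hij⟩) hil hlj
    · exact Or.inl ⟨le_trans hlj hj, l4 _ _ _ hij hil hlj⟩
    · refine Or.inr ⟨by omega, r4 _ _ (l - k) hij (by omega) (by omega)⟩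

theorem TS_empty_unique {R} (h : IsTransferSystem 0 R) : R = fun _ _ => False := by
  refine rel_ext fun p l => ⟨fun hr => ?_, False.elim⟩
  have := h.2.2.1 _ _ hr; omega

-- ######## finiteness

noncomputable instance TST_finite (n : ℕ) : Finite (TST n) := by
  have : Function.Injective
      (fun (R : TST n) => (fun a b : Fin (n + 1) => R.1 a b : Fin (n + 1) → Fin (n + 1) → Prop)) := by
    intro R S h
    apply Subtype.ext
    refine rel_ext fun p l => ?_
    rcases le_or_gt p n with hp | hp
    · rcases le_or_gt l n with hl | hl
      · have := congrFun (congrFun h ⟨p, by omega⟩) ⟨l, by omega⟩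
        simpa using this.to_iff
      · constructor
        · intro hr; have := R.2.2.2.1 _ _ hr; omega
        · intro hr; have := S.2.2.2.1 _ _ hr; omega
    · constructor
      · intro hr; have := R.2.2.2.1 _ _ hr; omega
      · intro hr; have := S.2.2.2.1 _ _ hr; omega
  exact Finite.of_injective _ this

noncomputable instance PairT_finite (i n : ℕ) : Finite (PairT i n) := by
  let f : PairT i n → TST n × TST n := fun p => (⟨p.1.1, p.2.1⟩, ⟨p.1.2, p.2.2.1⟩)
  have : Function.Injective f := by
    intro p q h
    apply Subtype.ext
    have h1 : p.1.1 = q.1.1 := congrArg (fun x : TST n × TST n => x.1.1) h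
    have h2 : p.1.2 = q.1.2 := congrArg (fun x : TST n × TST n => x.2.1) h
    exact Prod.ext h1 h2
  exact Finite.of_injective f this

-- ######## terminal equivalence

noncomputable def terminalEquiv (n : ℕ) : PairT n n ≃ TST n where
  toFun p := ⟨p.1.2, p.2.2.1⟩
  invFun M := ⟨(completeTS n, M.1), TS_complete n, M.2,
    fun i j k hm hik hkj => by
      have := M.2.2.2.1 _ _ hm
      exact ⟨by omega, hkj, by omega⟩,
    fun p h1 h2 => ⟨h1, h2, le_refl n⟩⟩
  left_inv p := by
    apply Subtype.ext
    have ha : p.1.1 = completeTS n := by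
      obtain ⟨hTa, hTm, hc, hfull⟩ := p.2
      refine rel_ext fun q l => ⟨fun hr => ?_, fun ⟨hq1, hql, hln⟩ => ?_⟩
      · have := hTa.2.2.1 _ _ hr; exact ⟨by omega, by omega, by omega⟩
      · exact hTa.2.2.2 q n l (hfull q hq1 (by omega)) hql hln
    exact Prod.ext ha.symm rfl
  right_inv M := rfl

noncomputable def TST_zero_equiv : TST 0 ≃ Unit where
  toFun _ := Unit.unit
  invFun _ := ⟨fun _ _ => False, ⟨fun i h1 h2 => by omega, fun _ _ _ h _ => h.elim,
    fun _ _ h => h.elim, fun _ _ _ h _ _ => h.elim⟩⟩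
  left_inv R := by
    apply Subtype.ext
    exact (TS_empty_unique R.2).symm
  right_inv _ := rfl


/-- The largest `l ≤ n` with `R i l` (or `0`). -/
noncomputable def maxA (R : ℕ → ℕ → Prop) (i n : ℕ) : ℕ :=
  @Nat.findGreatest (fun l => R i l) (Classical.decPred _) n

lemma maxA_eq {R : ℕ → ℕ → Prop} {i n m : ℕ} (h1 : m ≤ n) (h2 : m ≠ 0 → R i m)
    (h3 : ∀ l, m < l → l ≤ n → ¬R i l) : maxA R i n = m :=
  (@Nat.findGreatest_eq_iff m n (fun l => R i l) (Classical.decPred _)).mpr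
    ⟨h1, h2, fun l hl1 hl2 => h3 l hl1 hl2⟩

lemma maxA_le (R : ℕ → ℕ → Prop) (i n : ℕ) : maxA R i n ≤ n :=
  @Nat.findGreatest_le (fun l => R i l) (Classical.decPred _) n

lemma maxA_ge {R : ℕ → ℕ → Prop} {i n m : ℕ} (hm : m ≤ n) (h : R i m) : m ≤ maxA R i n :=
  @Nat.le_findGreatest m (fun l => R i l) (Classical.decPred _) n hm h

lemma maxA_spec {R : ℕ → ℕ → Prop} {i n m : ℕ} (hm : m ≤ n) (h : R i m) : R i (maxA R i n) :=
  @Nat.findGreatest_spec m (fun l => R i l) (Classical.decPred _) n hm h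

lemma maxA_max {R : ℕ → ℕ → Prop} {i n l : ℕ} (h1 : maxA R i n < l) (h2 : l ≤ n) : ¬R i l :=
  @Nat.findGreatest_is_greatest l (fun l => R i l) (Classical.decPred _) n h1 h2

lemma TSTsigma_inj (n : ℕ) : Function.Injective
    (fun x : (Σ v : Fin (n + 1), TST v × TST (n - v)) => (x.1.val, x.2.1.1, x.2.2.1)) := by
  rintro ⟨a, p1, p2⟩ ⟨b, q1, q2⟩ h
  simp only [Prod.mk.injEq] at h
  obtain ⟨h1, h2, h3⟩ := h
  have hab : a = b := Fin.ext h1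
  subst hab
  exact congrArg (Sigma.mk a) (Prod.ext (Subtype.ext h2) (Subtype.ext h3))

theorem TS_wrap {v : ℕ} {B} (hB : IsTransferSystem v B) : IsTransferSystem (v + 1) (wrapTS v B) := by
  obtain ⟨b1, b2, b3, b4⟩ := hB
  refine ⟨?_, ?_, ?_, ?_⟩
  · intro i hi1 hi2
    rcases Nat.eq_or_lt_of_le hi1 with h | h
    · exact Or.inl ⟨h.symm, hi1, hi2⟩
    · exact Or.inr ⟨h, le_refl i, b1 (i - 1) (by omega) (by omega)⟩
  · rintro i j k (⟨hi1, hj1, hjv⟩ | ⟨hi2, hij, hB1⟩) (⟨hj1', hk1, hkv⟩ | ⟨hj2, hjk, hB2⟩)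
    · exact Or.inl ⟨hi1, hk1, hkv⟩
    · have := b3 _ _ hB2
      exact Or.inl ⟨hi1, by omega, by omega⟩
    · exact absurd hj1' (by omega)
    · have r1 := b3 _ _ hB1
      have r2 := b3 _ _ hB2
      exact Or.inr ⟨hi2, by omega, b2 _ _ _ hB1 hB2⟩
  · rintro i j (⟨hi1, hj1, hjv⟩ | ⟨hi2, hij, hB1⟩)
    · omega
    · have := b3 _ _ hB1; omega
  · rintro i j k (⟨hi1, hj1, hjv⟩ | ⟨hi2, hij, hB1⟩) hik hkj
    · exact Or.inl ⟨hi1, by omega, by omega⟩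
    · exact Or.inr ⟨by omega, hik, b4 _ _ (k - 1) hB1 (by omega) (by omega)⟩

theorem restrict_concat {j m : ℕ} {A B} (hA : IsTransferSystem j A) (hB : IsTransferSystem m B) :
    restrictTS j (concatTS j A B) = A := by
  refine rel_ext fun p l => ⟨?_, fun h => ?_⟩
  · rintro ⟨hl, (⟨_, hA'⟩ | ⟨hp, hB'⟩)⟩
    · exact hA'
    · have := hB.2.2.1 _ _ hB'; omega
  · have := hA.2.2.1 _ _ h
    exact ⟨by omega, Or.inl ⟨by omega, h⟩⟩

theorem gfp_concat {j m : ℕ} {A B} (hA : IsTransferSystem j A) (hB : IsTransferSystem m B) :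
    gfpTS j (concatTS j A B) = B := by
  refine rel_ext fun p l => ⟨?_, fun h => ?_⟩
  · rintro ⟨hp, (⟨hlj, hA'⟩ | ⟨hpj, hB'⟩)⟩
    · have := hA.2.2.1 _ _ hA'; omega
    · rw [show p + j - j = p by omega, show l + j - j = l by omega] at hB'
      exact hB'
  · have := hB.2.2.1 _ _ h
    refine ⟨by omega, Or.inr ⟨by omega, ?_⟩⟩
    rw [show p + j - j = p by omega, show l + j - j = l by omega]
    exact h

theorem gfp1_wrap {v : ℕ} {B} (hB : IsTransferSystem v B) : gfpTS 1 (wrapTS v B) = B := by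
  refine rel_ext fun p l => ⟨?_, fun h => ?_⟩
  · rintro ⟨hp, (⟨hp1, _, _⟩ | ⟨hp2, hpl, hB'⟩)⟩
    · omega
    · rw [show p + 1 - 1 = p by omega, show l + 1 - 1 = l by omega] at hB'
      exact hB'
  · have := hB.2.2.1 _ _ h
    refine ⟨by omega, Or.inr ⟨by omega, by omega, ?_⟩⟩
    rw [show p + 1 - 1 = p by omega, show l + 1 - 1 = l by omega]
    exact h

theorem TS_split_recon {n : ℕ} {R} (hR : IsTransferSystem n R) (j : ℕ) (hj1 : 1 ≤ j)
    (hjn : j ≤ n) (hjR : R 1 j) (hmax : ∀ l, j < l → l ≤ n → ¬R 1 l) :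
    concatTS j (wrapTS (j - 1) (gfpTS 1 (restrictTS j R))) (gfpTS j R) = R := by
  obtain ⟨h1, h2, h3, h4⟩ := hR
  have noCross : ∀ p l, p ≤ j → j < l → ¬R p l := by
    intro p l hpj hjl hr
    have hrange := h3 _ _ hr
    have hp1 : R 1 p := h4 1 j p hjR (by omega) hpj
    exact hmax l hjl (by omega) (h2 1 p l hp1 hr)
  refine rel_ext fun p l => ⟨?_, ?_⟩
  · rintro (⟨hlj, (⟨hp1, hl1, hlj1⟩ | ⟨hp2, hpl, hq, hlj2, hr⟩)⟩ | ⟨hpj, hq, hr⟩)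
    · subst hp1
      exact h4 1 j l hjR hl1 hlj
    · rw [show p - 1 + 1 = p by omega, show l - 1 + 1 = l by omega] at hr
      exact hr
    · rw [show p - j + j = p by omega] at hr
      have hrange := h3 _ _ hr
      rw [show l - j + j = l by omega] at hr
      exact hr
  · intro hr
    have hrange := h3 _ _ hr
    rcases le_or_gt l j with hlj | hlj
    · refine Or.inl ⟨hlj, ?_⟩
      rcases Nat.eq_or_lt_of_le hrange.1 with hp1 | hp2
      · exact Or.inl ⟨hp1.symm, by omega, by omega⟩
      · refine Or.inr ⟨by omega, by omega, by omega, by omega, ?_⟩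
        rw [show p - 1 + 1 = p by omega, show l - 1 + 1 = l by omega]
        exact hr
    · have hpj : j + 1 ≤ p := by
        by_contra hc
        exact noCross p l (by omega) hlj hr
      refine Or.inr ⟨hpj, by omega, ?_⟩
      rw [show p - j + j = p by omega, show l - j + j = l by omega]
      exact hr

/-- Splitting a transfer system on `[n+1]` at the largest `j` with `1 → j`. -/
noncomputable def TSTsplit (n : ℕ) : TST (n + 1) ≃ Σ v : Fin (n + 1), TST v × TST (n - v) where
  toFun R :=
    let j := maxA R.1 1 (n + 1)
    have hj1 : 1 ≤ j := maxA_ge (by omega) (R.2.1 1 (le_refl 1) (by omega))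
    have hjn : j ≤ n + 1 := maxA_le _ _ _
    ⟨⟨j - 1, by omega⟩,
      ⟨gfpTS 1 (restrictTS j R.1), by
        have := TS_gfp (TS_restrict R.2 j hjn) 1
        simpa using this⟩,
      ⟨gfpTS j R.1, by
        have := TS_gfp R.2 j
        have e : n + 1 - j = n - (j - 1) := by omega
        rw [e] at this
        exact this⟩⟩
  invFun x :=
    ⟨concatTS (x.1.val + 1) (wrapTS x.1.val x.2.1.1) x.2.2.1, by
      have h := TS_concat (TS_wrap x.2.1.2) x.2.2.2
      have e : x.1.val + 1 + (n - x.1.val) = n + 1 := by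
        have := x.1.2; omega
      rw [e] at h
      exact h⟩
  left_inv R := by
    apply Subtype.ext
    set j := maxA R.1 1 (n + 1) with hjdef
    have hone : R.1 1 1 := R.2.1 1 (le_refl 1) (by omega)
    have hj1 : 1 ≤ j := maxA_ge (by omega) hone
    have hjn : j ≤ n + 1 := maxA_le _ _ _
    have hjR : R.1 1 j := maxA_spec (n := n + 1) (by omega) hone
    have hmax : ∀ l, j < l → l ≤ n + 1 → ¬R.1 1 l := fun l hl1 hl2 => maxA_max hl1 hl2
    show concatTS (j - 1 + 1) (wrapTS (j - 1) (gfpTS 1 (restrictTS j R.1))) (gfpTS j R.1) = R.1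
    rw [show j - 1 + 1 = j by omega]
    exact TS_split_recon R.2 j hj1 hjn hjR hmax
  right_inv x := by
    obtain ⟨v, B, C⟩ := x
    have hBw : IsTransferSystem (v.val + 1) (wrapTS v.val B.1) := TS_wrap B.2
    set R : ℕ → ℕ → Prop := concatTS (v.val + 1) (wrapTS v.val B.1) C.1 with hRdef
    have hmax : maxA R 1 (n + 1) = v.val + 1 := by
      apply maxA_eq
      · have := v.2; omega
      · intro _
        exact Or.inl ⟨le_refl _, Or.inl ⟨rfl, by omega, by omega⟩⟩
      · rintro l hl1 hl2 (⟨hlj, _⟩ | ⟨hp, _⟩) <;> omega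
    have hcomp1 : gfpTS 1 (restrictTS (v.val + 1) R) = B.1 := by
      rw [hRdef, restrict_concat hBw C.2, gfp1_wrap B.2]
    have hcomp2 : gfpTS (v.val + 1) R = C.1 := gfp_concat hBw C.2
    apply TSTsigma_inj n
    refine Prod.ext ?_ (Prod.ext ?_ ?_)
    · show maxA R 1 (n + 1) - 1 = v.val
      rw [hmax]
      omega
    · show gfpTS 1 (restrictTS (maxA R 1 (n + 1)) R) = B.1
      rw [hmax]
      exact hcomp1
    · show gfpTS (maxA R 1 (n + 1)) R = C.1
      rw [hmax]
      exact hcomp2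


theorem compat_restrict {Ra Rm} (h : Compatible Ra Rm) (k : ℕ) :
    Compatible (restrictTS k Ra) (restrictTS k Rm) :=
  fun a b c ⟨hb, hm⟩ h1 h2 => ⟨hb, h a b c hm h1 h2⟩

theorem compat_gfp {Ra Rm} (h : Compatible Ra Rm) (k : ℕ) :
    Compatible (gfpTS k Ra) (gfpTS k Rm) :=
  fun a b c ⟨ha, hm⟩ h1 h2 => ⟨by omega, h _ _ (c + k) hm (by omega) (by omega)⟩

/-- Adjoining full rows `1..i` to a transfer system gives a transfer system. -/
theorem TS_fullOr {n i : ℕ} {S} (hS : IsTransferSystem n S) :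
    IsTransferSystem n (fun p l => (1 ≤ p ∧ p ≤ i ∧ p ≤ l ∧ l ≤ n) ∨ S p l) := by
  obtain ⟨s1, s2, s3, s4⟩ := hS
  refine ⟨fun p h1 h2 => Or.inr (s1 p h1 h2), ?_, ?_, ?_⟩
  · rintro p l l' (⟨h1, h2, h3, h4⟩ | hs) (⟨g1, g2, g3, g4⟩ | gs)
    · exact Or.inl ⟨h1, h2, by omega, g4⟩
    · have := s3 _ _ gs
      exact Or.inl ⟨h1, h2, by omega, by omega⟩
    · have := s3 _ _ hs
      exact Or.inl ⟨by omega, by omega, by omega, by omega⟩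
    · exact Or.inr (s2 _ _ _ hs gs)
  · rintro p l (⟨h1, h2, h3, h4⟩ | hs)
    · omega
    · exact s3 _ _ hs
  · rintro p l κ (⟨h1, h2, h3, h4⟩ | hs) hy1 hy2
    · exact Or.inl ⟨h1, h2, hy1, by omega⟩
    · exact Or.inr (s4 _ _ _ hs hy1 hy2)

lemma PairTsigma_inj (i n : ℕ) : Function.Injective
    (fun x : (Σ v : Fin (n - i), PairT (i + 1) (i + 1 + v) × PairT 0 (n - (i + 1 + v))) =>
      (x.1.val, x.2.1.1.1, x.2.1.1.2, x.2.2.1.1, x.2.2.1.2)) := by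
  rintro ⟨a, p1, p2⟩ ⟨b, q1, q2⟩ h
  simp only [Prod.mk.injEq] at h
  obtain ⟨h1, h2, h3, h4, h5⟩ := h
  have hab : a = b := Fin.ext h1
  subst hab
  refine congrArg (Sigma.mk a) (Prod.ext (Subtype.ext ?_) (Subtype.ext ?_))
  · exact Prod.ext h2 h3
  · exact Prod.ext h4 h5

set_option maxHeartbeats 2000000 in
/-- The main splitting of compatible pairs with rows `1..i` full, at the largest `j`
with `(i+1) →_a j`. -/
noncomputable def PairTsplit (i n : ℕ) (hin : i < n) :
    PairT i n ≃ Σ v : Fin (n - i), PairT (i + 1) (i + 1 + v) × PairT 0 (n - (i + 1 + v)) where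
  toFun p :=
    ⟨⟨maxA p.1.1 (i + 1) n - (i + 1), by
        have h1 := maxA_le p.1.1 (i + 1) n
        have h2 : i + 1 ≤ maxA p.1.1 (i + 1) n := maxA_ge hin (p.2.1.1 (i + 1) (by omega) hin)
        omega⟩,
      ⟨(restrictTS (maxA p.1.1 (i + 1) n) p.1.1, restrictTS (maxA p.1.1 (i + 1) n) p.1.2), by
        obtain ⟨⟨Ra, Rm⟩, hTa, hTm, hc, hfull⟩ := p
        set j := maxA Ra (i + 1) n with hjdef
        have hji : i + 1 ≤ j := maxA_ge hin (hTa.1 (i + 1) (by omega) hin)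
        have hjn : j ≤ n := maxA_le _ _ _
        have hjR : Ra (i + 1) j := maxA_spec hin (hTa.1 (i + 1) (by omega) hin)
        have e : i + 1 + (j - (i + 1)) = j := by omega
        show IsTransferSystem (i + 1 + (j - (i + 1))) (restrictTS j Ra) ∧
          IsTransferSystem (i + 1 + (j - (i + 1))) (restrictTS j Rm) ∧
          Compatible (restrictTS j Ra) (restrictTS j Rm) ∧
          FullRows (i + 1) (i + 1 + (j - (i + 1))) (restrictTS j Ra)
        rw [e]
        refine ⟨TS_restrict hTa j hjn, TS_restrict hTm j hjn, compat_restrict hc j, ?_⟩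
        intro q h1 h2
        rcases Nat.lt_or_ge q (i + 1) with hq | hq
        · exact ⟨le_refl j, hTa.2.2.2 q n j (hfull q h1 (by omega)) (by omega) hjn⟩
        · have : q = i + 1 := by omega
          subst this
          exact ⟨le_refl j, hjR⟩⟩,
      ⟨(gfpTS (maxA p.1.1 (i + 1) n) p.1.1, gfpTS (maxA p.1.1 (i + 1) n) p.1.2), by
        obtain ⟨⟨Ra, Rm⟩, hTa, hTm, hc, hfull⟩ := p
        set j := maxA Ra (i + 1) n with hjdef
        have hji : i + 1 ≤ j := maxA_ge hin (hTa.1 (i + 1) (by omega) hin)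
        have hjn : j ≤ n := maxA_le _ _ _
        have e : n - (i + 1 + (j - (i + 1))) = n - j := by omega
        show IsTransferSystem (n - (i + 1 + (j - (i + 1)))) (gfpTS j Ra) ∧
          IsTransferSystem (n - (i + 1 + (j - (i + 1)))) (gfpTS j Rm) ∧
          Compatible (gfpTS j Ra) (gfpTS j Rm) ∧
          FullRows 0 (n - (i + 1 + (j - (i + 1)))) (gfpTS j Ra)
        rw [e]
        exact ⟨TS_gfp hTa j, TS_gfp hTm j, compat_gfp hc j,
          fun q h1 h2 => absurd h2 (by omega)⟩⟩⟩
  invFun x :=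
    ⟨(fun p l => (1 ≤ p ∧ p ≤ i ∧ p ≤ l ∧ l ≤ n)
        ∨ concatTS (i + 1 + x.1.val) x.2.1.1.1 x.2.2.1.1 p l,
      concatTS (i + 1 + x.1.val) x.2.1.1.2 x.2.2.1.2), by
      obtain ⟨v, ⟨⟨La, Lm⟩, hLa, hLm, hLc, hLfull⟩, ⟨⟨Ca, Cm⟩, hCa, hCm, hCc, hCfull⟩⟩ := x
      have hv : (v : ℕ) < n - i := v.2
      refine ⟨?_, ?_, ?_, ?_⟩
      · have h := TS_concat hLa hCa
        rw [show (i + 1 + v) + (n - (i + 1 + v)) = n by omega] at h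
        exact TS_fullOr h
      · have h := TS_concat hLm hCm
        rw [show (i + 1 + v) + (n - (i + 1 + v)) = n by omega] at h
        exact h
      · rintro a b c (⟨hb, hm⟩ | ⟨ha, hm⟩) h1 h2
        · exact Or.inr (Or.inl ⟨hb, hLc a b c hm h1 h2⟩)
        · have hrange := hCm.2.2.1 _ _ hm
          refine Or.inr (Or.inr ⟨by omega, ?_⟩)
          exact hCc (a - (i + 1 + v)) (b - (i + 1 + v)) (c - (i + 1 + v)) hm (by omega) (by omega)
      · intro q h1 h2
        exact Or.inl ⟨h1, h2, by omega, by omega⟩⟩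
  left_inv p := by
    obtain ⟨⟨Ra, Rm⟩, hTa, hTm, hc, hfull⟩ := p
    apply Subtype.ext
    set j := maxA Ra (i + 1) n with hjdef
    have hrefl : Ra (i + 1) (i + 1) := hTa.1 (i + 1) (by omega) hin
    have hji : i + 1 ≤ j := maxA_ge hin hrefl
    have hjn : j ≤ n := maxA_le _ _ _
    have hjR : Ra (i + 1) j := maxA_spec hin hrefl
    have hmaxl : ∀ l, j < l → l ≤ n → ¬Ra (i + 1) l := fun l u1 u2 => maxA_max u1 u2
    have noCross_a : ∀ q l, i + 1 ≤ q → q ≤ j → j < l → ¬Ra q l := by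
      intro q l hq1 hq2 hl hr
      have hrange := hTa.2.2.1 _ _ hr
      have h1 : Ra (i + 1) q := hTa.2.2.2 (i + 1) j q hjR hq1 hq2
      exact hmaxl l hl (by omega) (hTa.2.1 (i + 1) q l h1 hr)
    have noCross_m : ∀ q l, q ≤ j → j < l → ¬Rm q l := by
      intro q l hq hl hr
      have hrange := hTm.2.2.1 _ _ hr
      have hja : Ra j l := hc q l j hr hq (by omega)
      exact noCross_a j l hji (le_refl j) hl hja
    show ((fun p l => (1 ≤ p ∧ p ≤ i ∧ p ≤ l ∧ l ≤ n)
        ∨ concatTS (i + 1 + (j - (i + 1))) (restrictTS j Ra) (gfpTS j Ra) p l,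
      concatTS (i + 1 + (j - (i + 1))) (restrictTS j Rm) (gfpTS j Rm))
        : (ℕ → ℕ → Prop) × (ℕ → ℕ → Prop)) = (Ra, Rm)
    rw [show i + 1 + (j - (i + 1)) = j by omega]
    refine Prod.ext ?_ ?_
    · refine rel_ext fun p l => ⟨?_, ?_⟩
      · rintro (⟨h1, h2, h3, h4⟩ | (⟨hlj, hlj2, hr⟩ | ⟨hpj, hq, hr⟩))
        · exact hTa.2.2.2 p n l (hfull p h1 h2) h3 h4
        · exact hr
        · rw [show p - j + j = p by omega] at hr
          have := hTa.2.2.1 _ _ hr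
          rw [show l - j + j = l by omega] at hr
          exact hr
      · intro hr
        have hrange := hTa.2.2.1 _ _ hr
        rcases Nat.lt_or_ge p (i + 1) with hp | hp
        · exact Or.inl ⟨by omega, by omega, by omega, by omega⟩
        · rcases le_or_gt l j with hlj | hlj
          · exact Or.inr (Or.inl ⟨hlj, hlj, hr⟩)
          · have hpj : j + 1 ≤ p := by
              by_contra hcon
              exact noCross_a p l hp (by omega) hlj hr
            refine Or.inr (Or.inr ⟨hpj, by omega, ?_⟩)
            rw [show p - j + j = p by omega, show l - j + j = l by omega]
            exact hr
    · refine rel_ext fun p l => ⟨?_, ?_⟩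
      · rintro (⟨hlj, hlj2, hr⟩ | ⟨hpj, hq, hr⟩)
        · exact hr
        · rw [show p - j + j = p by omega] at hr
          have := hTm.2.2.1 _ _ hr
          rw [show l - j + j = l by omega] at hr
          exact hr
      · intro hr
        have hrange := hTm.2.2.1 _ _ hr
        rcases le_or_gt l j with hlj | hlj
        · exact Or.inl ⟨hlj, hlj, hr⟩
        · have hpj : j + 1 ≤ p := by
            by_contra hcon
            exact noCross_m p l (by omega) hlj hr
          refine Or.inr ⟨hpj, by omega, ?_⟩
          rw [show p - j + j = p by omega, show l - j + j = l by omega]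
          exact hr
  right_inv x := by
    obtain ⟨v, ⟨⟨La, Lm⟩, hLa, hLm, hLc, hLfull⟩, ⟨⟨Ca, Cm⟩, hCa, hCm, hCc, hCfull⟩⟩ := x
    have hv : (v : ℕ) < n - i := v.2
    set Ra : ℕ → ℕ → Prop :=
      fun p l => (1 ≤ p ∧ p ≤ i ∧ p ≤ l ∧ l ≤ n) ∨ concatTS (i + 1 + v) La Ca p l with hRadef
    set Rm : ℕ → ℕ → Prop := concatTS (i + 1 + v) Lm Cm with hRmdef
    have hLaj : IsTransferSystem (i + 1 + v) La := hLa
    have hmax : maxA Ra (i + 1) n = i + 1 + v := by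
      apply maxA_eq
      · omega
      · intro _
        exact Or.inr (Or.inl ⟨le_refl _, hLfull (i + 1) (by omega) (le_refl _)⟩)
      · rintro l hl1 hl2 (⟨u1, u2, u3, u4⟩ | (⟨ulj, _⟩ | ⟨upj, _⟩)) <;> omega
    apply PairTsigma_inj i n
    refine Prod.ext ?_ (Prod.ext ?_ (Prod.ext ?_ (Prod.ext ?_ ?_)))
    · show maxA Ra (i + 1) n - (i + 1) = v.val
      rw [hmax]; omega
    · show restrictTS (maxA Ra (i + 1) n) Ra = La
      rw [hmax]
      refine rel_ext fun p l => ⟨?_, ?_⟩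
      · rintro ⟨hlj, (⟨h1, h2, h3, h4⟩ | (⟨_, hr⟩ | ⟨hpj, hr⟩))⟩
        · have hLn : La p (i + 1 + v) := hLfull p h1 (by omega)
          exact hLa.2.2.2 p (i + 1 + v) l hLn h3 hlj
        · exact hr
        · have := hCa.2.2.1 _ _ hr
          omega
      · intro hr
        have := hLa.2.2.1 _ _ hr
        exact ⟨by omega, Or.inr (Or.inl ⟨by omega, hr⟩)⟩
    · show restrictTS (maxA Ra (i + 1) n) Rm = Lm
      rw [hmax, hRmdef]
      exact restrict_concat hLm hCm
    · show gfpTS (maxA Ra (i + 1) n) Ra = Ca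
      rw [hmax]
      refine rel_ext fun p l => ⟨?_, ?_⟩
      · rintro ⟨hp, (⟨h1, h2, h3, h4⟩ | (⟨ulj, hr⟩ | ⟨upj, hr⟩))⟩
        · omega
        · have := hLa.2.2.1 _ _ hr
          omega
        · rw [show p + (i + 1 + v) - (i + 1 + v) = p by omega,
            show l + (i + 1 + v) - (i + 1 + v) = l by omega] at hr
          exact hr
      · intro hr
        have := hCa.2.2.1 _ _ hr
        refine ⟨by omega, Or.inr (Or.inr ⟨by omega, ?_⟩)⟩
        rw [show p + (i + 1 + v) - (i + 1 + v) = p by omega,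
          show l + (i + 1 + v) - (i + 1 + v) = l by omega]
        exact hr
    · show gfpTS (maxA Ra (i + 1) n) Rm = Cm
      rw [hmax, hRmdef]
      exact gfp_concat hLm hCm


lemma card_sigma_fin {k : ℕ} (β : Fin k → Type) [∀ v, Finite (β v)] :
    Nat.card (Σ v, β v) = ∑ v, Nat.card (β v) := by
  classical
  have := fun v => Fintype.ofFinite (β v)
  simp [Nat.card_eq_fintype_card]

noncomputable def Fc (i n : ℕ) : ℕ := Nat.card (PairT i n)

lemma Fc_rec (i n : ℕ) (h : i < n) :
    Fc i n = ∑ v : Fin (n - i), Fc (i + 1) (i + 1 + v) * Fc 0 (n - (i + 1 + v)) := by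
  unfold Fc
  rw [Nat.card_congr (PairTsplit i n h), card_sigma_fin]
  exact Finset.sum_congr rfl fun v _ => Nat.card_prod _ _

lemma card_TST_eq : ∀ n, Nat.card (TST n) = catalan n := by
  intro n
  induction n using Nat.strong_induction_on with
  | _ n ih =>
    match n with
    | 0 =>
        rw [Nat.card_congr TST_zero_equiv]
        simp
    | (n + 1) =>
        rw [Nat.card_congr (TSTsplit n), card_sigma_fin, catalan_succ]
        refine Finset.sum_congr rfl fun v _ => ?_
        rw [Nat.card_prod, ih v (by omega), ih (n - v) (by omega)]

lemma Fc_diag (n : ℕ) : Fc n n = catalan n := by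
  unfold Fc
  rw [Nat.card_congr (terminalEquiv n), card_TST_eq]

lemma Fc_closed : ∀ m i n : ℕ, i ≤ n → n - i = m → ((Fc i n : ℤ)) = Psi i m := by
  intro m
  induction m using Nat.strong_induction_on with
  | _ m ih =>
    intro i n hin hm
    rcases Nat.eq_or_lt_of_le hin with heq | hlt
    · subst heq
      have hm0 : m = 0 := by omega
      subst hm0
      rw [Fc_diag, Psi_zero]
    · obtain ⟨m', rfl⟩ : ∃ m', m = m' + 1 := ⟨m - 1, by omega⟩
      calc ((Fc i n : ℕ) : ℤ)
          = ∑ v : Fin (n - i), ((Fc (i + 1) (i + 1 + v) : ℕ) : ℤ) * ((Fc 0 (n - (i + 1 + v)) : ℕ) : ℤ) := by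
            rw [Fc_rec i n hlt]
            push_cast
            rfl
        _ = ∑ a ∈ range (n - i), ((Fc (i + 1) (i + 1 + a) : ℕ) : ℤ) * ((Fc 0 (n - (i + 1 + a)) : ℕ) : ℤ) :=
            Fin.sum_univ_eq_sum_range
              (fun a => ((Fc (i + 1) (i + 1 + a) : ℕ) : ℤ) * ((Fc 0 (n - (i + 1 + a)) : ℕ) : ℤ)) (n - i)
        _ = ∑ a ∈ range (m' + 1), Psi (i + 1) a * Az (m' - a) 1 := by
            rw [hm]
            refine Finset.sum_congr rfl fun a ha => ?_
            have ha' : a < m' + 1 := Finset.mem_range.mp ha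
            have h1 : ((Fc (i + 1) (i + 1 + a) : ℕ) : ℤ) = Psi (i + 1) a := by
              have := ih a (by omega) (i + 1) (i + 1 + a) (by omega) (by omega)
              exact this
            have h2 : ((Fc 0 (n - (i + 1 + a)) : ℕ) : ℤ) = Psi 0 (m' - a) := by
              have := ih (m' - a) (by omega) 0 (n - (i + 1 + a)) (by omega) (by omega)
              exact this
            rw [h1, h2]
            rfl
        _ = Psi i (m' + 1) := (AR i m').symm


lemma Psi_one (m : ℕ) : Psi 1 m = Az m 2 := by
  show (∑ s ∈ range 1, Tz 0 s * Az m (0 + 2 - s)) = Az m 2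
  rw [Finset.sum_range_one]
  show Tz 0 0 * Az m 2 = Az m 2
  rw [show Tz 0 0 = 1 from rfl, one_mul]

end FCaux

lemma dWrapped_eq_Fc (n : ℕ) : dWrapped n = FCaux.Fc 1 n := by
  unfold dWrapped FCaux.Fc FCaux.PairT
  apply Nat.card_congr
  apply Equiv.subtypeEquivRight
  intro p
  constructor
  · rintro ⟨a, b, c, d⟩
    refine ⟨a, b, c, fun q h1 h2 => ?_⟩
    have : q = 1 := by omega
    subst this
    exact d
  · rintro ⟨a, b, c, d⟩
    exact ⟨a, b, c, d 1 (le_refl 1) (le_refl 1)⟩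

/-- For `n ≥ 1`, `d(n, 1) = A_{n-1}(3, 2)`; equivalently,
`(3(n-1) + 2) · d(n, 1) = 2 · C(3(n-1) + 2, n-1)`. -/
theorem dWrapped_eq_fussCatalan (n : ℕ) (hn : 1 ≤ n) :
    (3 * (n - 1) + 2) * dWrapped n = 2 * Nat.choose (3 * (n - 1) + 2) (n - 1) := by
  have h1 : ((dWrapped n : ℕ) : ℤ) = FCaux.Az (n - 1) 2 := by
    rw [dWrapped_eq_Fc, FCaux.Fc_closed (n - 1) 1 n hn (by omega)]
    exact FCaux.Psi_one (n - 1)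
  have key : ((3 * (n - 1) + 2 : ℕ) : ℤ) * ((dWrapped n : ℕ) : ℤ)
      = ((2 : ℕ) : ℤ) * ((Nat.choose (3 * (n - 1) + 2) (n - 1) : ℕ) : ℤ) := by
    rw [h1]
    simpa [FCaux.chz] using FCaux.final_arith (n - 1)
  exact_mod_cast key
end

section
/- Let O_a be a transfer system on [n] whose core equals O_{n_1}^cpt ⊕ … ⊕ O_{n_k}^cpt for positive integers n_1, …, n_k with n_1 + … + n_k = n. Then the number of transfer systems O_m on [n] such that (O_a, O_m) is compatible equals the product Cat(n_1) · Cat(n_2) · … · Cat(n_k) of Catalan numbers. -/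
section Aux

/-! ### Finiteness -/

lemma ts_finite (n : ℕ) (P : (ℕ → ℕ → Prop) → Prop)
    (hP : ∀ R, P R → IsTransferSystem n R) :
    Finite {R : ℕ → ℕ → Prop // P R} := by
  apply Finite.of_injective (β := Fin (n + 2) → Fin (n + 2) → Prop)
    (f := fun R i j => R.1 i.val j.val)
  intro R S h
  apply Subtype.ext
  funext i j
  have hR := hP _ R.2
  have hS := hP _ S.2
  rcases Nat.lt_or_ge i (n + 2) with hi | hi
  · rcases Nat.lt_or_ge j (n + 2) with hj | hj
    · exact congrFun (congrFun h ⟨i, hi⟩) ⟨j, hj⟩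
    · apply propext
      constructor
      · intro hij; have := hR.2.2.1 _ _ hij; omega
      · intro hij; have := hS.2.2.1 _ _ hij; omega
  · apply propext
    constructor
    · intro hij; have := hR.2.2.1 _ _ hij; omega
    · intro hij; have := hS.2.2.1 _ _ hij; omega

instance ts_finite' (n : ℕ) : Finite {R : ℕ → ℕ → Prop // IsTransferSystem n R} :=
  ts_finite n _ (fun _ h => h)

lemma my_card_sigma {ι : Type} [Fintype ι] (f : ι → Type) [∀ i, Finite (f i)] :
    Nat.card (Σ i, f i) = ∑ i, Nat.card (f i) := by
  letI : ∀ i, Fintype (f i) := fun i => Fintype.ofFinite _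
  simp [Nat.card_eq_fintype_card, Fintype.card_sigma]

/-! ### Compatibility vs core -/

lemma core_arrow {n : ℕ} {Oa : ℕ → ℕ → Prop} (ha : IsTransferSystem n Oa)
    {i j k : ℕ} (hc : coreTS n Oa i j) (hik : i ≤ k) (hkj : k ≤ j) : Oa k j := by
  obtain ⟨h1, hij, hjn, hm⟩ := hc
  have key : ∀ d k, k + d = j → i ≤ k → Oa k j := by
    intro d
    induction d with
    | zero =>
      intro k hk _
      have : k = j := by omega
      subst this
      exact ha.1 k (by omega) (by omega)
    | succ d ihd =>
      intro k hk hik'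
      exact ha.2.1 _ _ _ (hm k hik' (by omega)) (ihd (k + 1) (by omega) (by omega))
  exact key (j - k) k (by omega) hik

lemma compat_iff {n : ℕ} {Oa Om : ℕ → ℕ → Prop} (ha : IsTransferSystem n Oa)
    (hm : IsTransferSystem n Om) :
    Compatible Oa Om ↔ ∀ i j, Om i j → coreTS n Oa i j := by
  constructor
  · intro hc i j hij
    obtain ⟨h1, hij', hjn⟩ := hm.2.2.1 _ _ hij
    refine ⟨h1, hij', hjn, fun m him hmj => ?_⟩
    have h2 : Oa m j := hc i j m hij him (by omega)
    exact ha.2.2.2 _ _ _ h2 (by omega) (by omega)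
  · intro hs i j k hij hik hkj
    exact core_arrow ha (hs i j hij) hik hkj

/-! ### Structural lemmas about concat/restrict/gfp/wrap -/

lemma ts_restrict {n k : ℕ} {R : ℕ → ℕ → Prop} (h : IsTransferSystem n R) (hk : k ≤ n) :
    IsTransferSystem k (restrictTS k R) := by
  obtain ⟨hrefl, htrans, hbd, hres⟩ := h
  refine ⟨fun i h1 hik => ⟨hik, hrefl i h1 (le_trans hik hk)⟩, ?_, ?_, ?_⟩
  · rintro i j l ⟨hj, hij⟩ ⟨hl, hjl⟩; exact ⟨hl, htrans _ _ _ hij hjl⟩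
  · rintro i j ⟨hj, hij⟩; have := hbd _ _ hij; exact ⟨this.1, this.2.1, hj⟩
  · rintro i j l ⟨hj, hij⟩ hil hlj; exact ⟨le_trans hlj hj, hres _ _ _ hij hil hlj⟩

lemma ts_gfp {k m : ℕ} {R : ℕ → ℕ → Prop} (h : IsTransferSystem (k + m) R) :
    IsTransferSystem m (gfpTS k R) := by
  obtain ⟨hrefl, htrans, hbd, hres⟩ := h
  refine ⟨fun i h1 him => ⟨h1, hrefl _ (by omega) (by omega)⟩, ?_, ?_, ?_⟩
  · rintro i j l ⟨h1, hij⟩ ⟨h1', hjl⟩; exact ⟨h1, htrans _ _ _ hij hjl⟩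
  · rintro i j ⟨h1, hij⟩; have := hbd _ _ hij; exact ⟨h1, by omega, by omega⟩
  · rintro i j l ⟨h1, hij⟩ hil hlj; exact ⟨h1, hres _ _ _ hij (by omega) (by omega)⟩

lemma ts_concat {k m : ℕ} {RL RR : ℕ → ℕ → Prop}
    (hL : IsTransferSystem k RL) (hR : IsTransferSystem m RR) :
    IsTransferSystem (k + m) (concatTS k RL RR) := by
  obtain ⟨lrefl, ltrans, lbd, lres⟩ := hL
  obtain ⟨rrefl, rtrans, rbd, rres⟩ := hR
  refine ⟨?_, ?_, ?_, ?_⟩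
  · intro i h1 hikm
    rcases le_or_gt i k with h | h
    · exact Or.inl ⟨h, lrefl i h1 h⟩
    · exact Or.inr ⟨h, rrefl _ (by omega) (by omega)⟩
  · rintro i j l (⟨hj, hij⟩ | ⟨hi, hij⟩) (⟨hl, hjl⟩ | ⟨hj', hjl⟩)
    · exact Or.inl ⟨hl, ltrans _ _ _ hij hjl⟩
    · exfalso; omega
    · exfalso
      have h1 := rbd _ _ hij
      have h2 := lbd _ _ hjl
      omega
    · exact Or.inr ⟨hi, rtrans _ _ _ hij hjl⟩
  · rintro i j (⟨hj, hij⟩ | ⟨hi, hij⟩)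
    · have := lbd _ _ hij; exact ⟨this.1, this.2.1, by omega⟩
    · have := rbd _ _ hij; exact ⟨by omega, by omega, by omega⟩
  · rintro i j l (⟨hj, hij⟩ | ⟨hi, hij⟩) hil hlj
    · exact Or.inl ⟨by omega, lres _ _ _ hij hil (by omega)⟩
    · exact Or.inr ⟨by omega, rres _ _ _ hij (by omega) (by omega)⟩

lemma ts_wrap {m : ℕ} {S : ℕ → ℕ → Prop} (h : IsTransferSystem m S) :
    IsTransferSystem (m + 1) (wrapTS m S) := by
  obtain ⟨srefl, strans, sbd, sres⟩ := h
  refine ⟨?_, ?_, ?_, ?_⟩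
  · intro i h1 him
    by_cases hi : i = 1
    · exact Or.inl ⟨hi, by omega, by omega⟩
    · exact Or.inr ⟨by omega, le_refl _, srefl _ (by omega) (by omega)⟩
  · rintro i j l (⟨hi, hj1, hj⟩ | ⟨hi, hij, hS⟩) hjl
    · rcases hjl with ⟨hj', hl1, hl⟩ | ⟨hj2, hjl', hS⟩
      · exact Or.inl ⟨hi, hl1, hl⟩
      · have := sbd _ _ hS; exact Or.inl ⟨hi, by omega, by omega⟩
    · have hb := sbd _ _ hS
      rcases hjl with ⟨hj', _, _⟩ | ⟨hj2, hjl', hS'⟩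
      · exfalso; omega
      · exact Or.inr ⟨hi, by omega, strans _ _ _ hS hS'⟩
  · rintro i j (⟨hi, hj1, hj⟩ | ⟨hi, hij, hS⟩)
    · exact ⟨by omega, by omega, hj⟩
    · have := sbd _ _ hS; exact ⟨by omega, hij, by omega⟩
  · rintro i j l (⟨hi, hj1, hj⟩ | ⟨hi, hij, hS⟩) hil hlj
    · exact Or.inl ⟨by omega, by omega, by omega⟩
    · exact Or.inr ⟨by omega, hil, sres _ _ _ hS (by omega) (by omega)⟩

end Aux

section Aux2

lemma restrict_concat {k m : ℕ} {R₁ R₂ : ℕ → ℕ → Prop}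
    (h₁ : IsTransferSystem k R₁) (h₂ : IsTransferSystem m R₂) :
    restrictTS k (concatTS k R₁ R₂) = R₁ := by
  funext i j
  apply propext
  constructor
  · rintro ⟨hj, ⟨_, hij⟩ | ⟨hi, hij⟩⟩
    · exact hij
    · exfalso; have := h₂.2.2.1 _ _ hij; omega
  · intro hij
    have := h₁.2.2.1 _ _ hij
    exact ⟨this.2.2, Or.inl ⟨this.2.2, hij⟩⟩

lemma gfp_concat {k m : ℕ} {R₁ R₂ : ℕ → ℕ → Prop}
    (h₁ : IsTransferSystem k R₁) (h₂ : IsTransferSystem m R₂) :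
    gfpTS k (concatTS k R₁ R₂) = R₂ := by
  funext i j
  apply propext
  constructor
  · rintro ⟨h1, ⟨hj, hij⟩ | ⟨hi, hij⟩⟩
    · exfalso; have := h₁.2.2.1 _ _ hij; omega
    · rw [Nat.add_sub_cancel, Nat.add_sub_cancel] at hij; exact hij
  · intro hij
    have hb := h₂.2.2.1 _ _ hij
    refine ⟨hb.1, Or.inr ⟨by omega, ?_⟩⟩
    rw [Nat.add_sub_cancel, Nat.add_sub_cancel]; exact hij

lemma concat_eq_of_sub {k m : ℕ} {R Q : ℕ → ℕ → Prop}
    (h : IsTransferSystem (k + m) R)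
    (hsub : ∀ i j, R i j → concatTS k (completeTS k) Q i j) :
    R = concatTS k (restrictTS k R) (gfpTS k R) := by
  funext i j
  apply propext
  constructor
  · intro hij
    rcases hsub _ _ hij with ⟨hj, _⟩ | ⟨hi, _⟩
    · exact Or.inl ⟨hj, hj, hij⟩
    · refine Or.inr ⟨hi, by omega, ?_⟩
      have hb := h.2.2.1 _ _ hij
      have e1 : i - k + k = i := by omega
      have e2 : j - k + k = j := by omega
      rw [e1, e2]; exact hij
  · rintro (⟨hj, _, hij⟩ | ⟨hi, h1, hij⟩)
    · exact hij
    · have e1 : i - k + k = i := by omega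
      rw [e1] at hij
      have hb := h.2.2.1 _ _ hij
      have e2 : j - k + k = j := by omega
      rw [e2] at hij; exact hij

lemma concat_sub {k : ℕ} {R₁ R₂ Q : ℕ → ℕ → Prop} (h₁ : IsTransferSystem k R₁)
    (h₂ : ∀ i j, R₂ i j → Q i j) :
    ∀ i j, concatTS k R₁ R₂ i j → concatTS k (completeTS k) Q i j := by
  rintro i j (⟨hj, hij⟩ | ⟨hi, hij⟩)
  · have := h₁.2.2.1 _ _ hij; exact Or.inl ⟨hj, this.1, this.2.1, hj⟩
  · exact Or.inr ⟨hi, h₂ _ _ hij⟩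

lemma gfp_sub {k : ℕ} {R Q : ℕ → ℕ → Prop}
    (hsub : ∀ i j, R i j → concatTS k (completeTS k) Q i j) :
    ∀ i j, gfpTS k R i j → Q i j := by
  rintro i j ⟨h1, hij⟩
  rcases hsub _ _ hij with ⟨hj, hc⟩ | ⟨hi, hq⟩
  · exfalso; obtain ⟨c1, c2, c3⟩ := hc; omega
  · rw [Nat.add_sub_cancel, Nat.add_sub_cancel] at hq; exact hq

/-! ### The wrap-decomposition of a transfer system -/

lemma gfp_succ_concat_wrap {j m : ℕ} {R₁ R₂ : ℕ → ℕ → Prop}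
    (h₁ : IsTransferSystem j R₁) (h₂ : IsTransferSystem m R₂) :
    gfpTS (j + 1) (concatTS j R₁ (wrapTS m R₂)) = R₂ := by
  funext x y
  apply propext
  constructor
  · rintro ⟨h1, ⟨hy, hxy⟩ | ⟨hx, hxy⟩⟩
    · exfalso; omega
    · have e1 : x + (j + 1) - j = x + 1 := by omega
      have e2 : y + (j + 1) - j = y + 1 := by omega
      rw [e1, e2] at hxy
      rcases hxy with ⟨hx1, _, _⟩ | ⟨_, _, hS⟩
      · exfalso; omega
      · simpa using hS
  · intro hxy
    have hb := h₂.2.2.1 _ _ hxy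
    refine ⟨hb.1, Or.inr ⟨by omega, ?_⟩⟩
    have e1 : x + (j + 1) - j = x + 1 := by omega
    have e2 : y + (j + 1) - j = y + 1 := by omega
    rw [e1, e2]
    exact Or.inr ⟨by omega, by omega, by simpa using hxy⟩

lemma sInf_concat_wrap {n j : ℕ} (hj : j ≤ n) {R₁ R₂ : ℕ → ℕ → Prop}
    (h₁ : IsTransferSystem j R₁) (h₂ : IsTransferSystem (n - j) R₂) :
    sInf {i | concatTS j R₁ (wrapTS (n - j) R₂) i (n + 1)} = j + 1 := by
  have hmem : concatTS j R₁ (wrapTS (n - j) R₂) (j + 1) (n + 1) :=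
    Or.inr ⟨le_refl _, Or.inl ⟨by omega, by omega, by omega⟩⟩
  have hmem' : (j + 1) ∈ {i | concatTS j R₁ (wrapTS (n - j) R₂) i (n + 1)} := hmem
  apply le_antisymm (Nat.sInf_le hmem')
  refine le_csInf ⟨j + 1, hmem'⟩ ?_
  rintro i (⟨hle, _⟩ | ⟨hi, _⟩)
  · exfalso; omega
  · exact hi

lemma ts_reconstruct {n : ℕ} {R : ℕ → ℕ → Prop} (h : IsTransferSystem (n + 1) R)
    {m : ℕ} (hm : m = sInf {i | R i (n + 1)}) :
    1 ≤ m ∧ m ≤ n + 1 ∧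
      R = concatTS (m - 1) (restrictTS (m - 1) R)
        (wrapTS (n - (m - 1)) (gfpTS m R)) := by
  have hne : (n + 1) ∈ {i | R i (n + 1)} := h.1 (n + 1) (by omega) (le_refl _)
  have hmem : R m (n + 1) := by rw [hm]; exact Nat.sInf_mem ⟨n + 1, hne⟩
  have hbm := h.2.2.1 _ _ hmem
  have hmin : ∀ i, R i (n + 1) → m ≤ i := by
    intro i hi; rw [hm]; exact Nat.sInf_le hi
  refine ⟨hbm.1, hbm.2.1, ?_⟩
  funext i k
  apply propext
  constructor
  · intro hik
    have hb := h.2.2.1 _ _ hik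
    rcases le_or_gt k (m - 1) with hk | hk
    · exact Or.inl ⟨hk, hk, hik⟩
    · -- k ≥ m
      have him : m ≤ i := by
        by_contra hcon
        have h1 : R i m := h.2.2.2 _ _ _ hik (by omega) (by omega)
        have h2 : R i (n + 1) := h.2.1 _ _ _ h1 hmem
        have := hmin _ h2
        omega
      refine Or.inr ⟨by omega, ?_⟩
      rcases Nat.eq_or_lt_of_le him with he | hlt
      · -- i = m : first wrap branch
        refine Or.inl ⟨by omega, by omega, by omega⟩
      · -- i ≥ m + 1 : second wrap branch
        refine Or.inr ⟨by omega, by omega, ⟨by omega, ?_⟩⟩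
        have e1 : i - (m - 1) - 1 + m = i := by omega
        have e2 : k - (m - 1) - 1 + m = k := by omega
        rw [e1, e2]; exact hik
  · rintro (⟨hk, _, hik⟩ | ⟨hi, hw⟩)
    · exact hik
    · rcases hw with ⟨h1, hk1, hk2⟩ | ⟨h2, hik', ⟨hg1, hg⟩⟩
      · -- i = m, and m ≤ k ≤ n+1 : restriction of R m (n+1)
        have hi' : i = m := by omega
        subst hi'
        exact h.2.2.2 _ _ _ hmem (by omega) (by omega)
      · have e1 : i - (m - 1) - 1 + m = i := by omega
        have e2 : k - (m - 1) - 1 + m = k := by omega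
        rw [e1, e2] at hg; exact hg

end Aux2

section Aux3

/-- The number of transfer systems on `[n]`. -/
noncomputable def NTS (n : ℕ) : ℕ :=
  Nat.card {R : ℕ → ℕ → Prop // IsTransferSystem n R}

lemma ts_empty : IsTransferSystem 0 (fun _ _ => False) :=
  ⟨fun i h1 h0 => by omega, fun _ _ _ h => h.elim, fun _ _ h => h.elim,
    fun _ _ _ h => h.elim⟩

lemma ts_zero_unique {R : ℕ → ℕ → Prop} (h : IsTransferSystem 0 R) :
    R = fun _ _ => False := by
  funext i j
  apply propext
  exact ⟨fun hij => by have := h.2.2.1 _ _ hij; omega, False.elim⟩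

lemma NTS_zero : NTS 0 = 1 := by
  rw [NTS, Nat.card_eq_one_iff_unique]
  constructor
  · constructor
    rintro ⟨R, hR⟩ ⟨S, hS⟩
    apply Subtype.ext
    show R = S
    rw [ts_zero_unique hR, ts_zero_unique hS]
  · exact ⟨⟨_, ts_empty⟩⟩

/-- The decomposition map used for the Catalan recurrence. -/
noncomputable def gmap (n : ℕ)
    (p : Σ j : Fin (n + 1), {R₁ : ℕ → ℕ → Prop // IsTransferSystem j.1 R₁} ×
      {R₂ : ℕ → ℕ → Prop // IsTransferSystem (n - j.1) R₂}) :
    {R : ℕ → ℕ → Prop // IsTransferSystem (n + 1) R} :=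
  ⟨concatTS p.1.1 p.2.1.1 (wrapTS (n - p.1.1) p.2.2.1), by
    have hlt := p.1.isLt
    have h := ts_concat p.2.1.2 (ts_wrap p.2.2.2)
    have e : (p.1 : ℕ) + (n - p.1.1 + 1) = n + 1 := by omega
    rwa [e] at h⟩

lemma gmap_bijective (n : ℕ) : Function.Bijective (gmap n) := by
  constructor
  · rintro ⟨⟨j, hj⟩, ⟨R₁, h₁⟩, ⟨R₂, h₂⟩⟩ ⟨⟨j', hj'⟩, ⟨R₁', h₁'⟩, ⟨R₂', h₂'⟩⟩ hpq
    simp only [gmap, Subtype.mk.injEq] at hpq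
    have h₁n : IsTransferSystem j R₁ := h₁
    have h₂n : IsTransferSystem (n - j) R₂ := h₂
    have h₁n' : IsTransferSystem j' R₁' := h₁'
    have h₂n' : IsTransferSystem (n - j') R₂' := h₂'
    have hpq' : concatTS j R₁ (wrapTS (n - j) R₂) =
        concatTS j' R₁' (wrapTS (n - j') R₂') := hpq
    have hs1 := sInf_concat_wrap (n := n) (j := j) (by omega) h₁n h₂n
    have hs2 := sInf_concat_wrap (n := n) (j := j') (by omega) h₁n' h₂n'
    rw [hpq'] at hs1
    have hjj : j = j' := by omega
    subst hjj
    have hr : R₁ = R₁' := by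
      have e1 := restrict_concat h₁n (ts_wrap h₂n)
      have e2 := restrict_concat h₁n' (ts_wrap h₂n')
      rw [← e1, ← e2, hpq']
    have hg : R₂ = R₂' := by
      have e1 := gfp_succ_concat_wrap h₁n h₂n
      have e2 := gfp_succ_concat_wrap h₁n' h₂n'
      rw [← e1, ← e2, hpq']
    subst hr; subst hg
    rfl
  · rintro ⟨R, hR⟩
    set m := sInf {i | R i (n + 1)} with hm
    obtain ⟨hm1, hm2, hrec⟩ := ts_reconstruct hR hm
    have hR' : IsTransferSystem ((m - 1) + (n - (m - 1) + 1)) R := by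
      have e : (m - 1) + (n - (m - 1) + 1) = n + 1 := by omega
      rwa [e]
    refine ⟨⟨⟨m - 1, by omega⟩, ⟨restrictTS (m - 1) R, ts_restrict hR (by omega)⟩,
      ⟨gfpTS m R, ?_⟩⟩, ?_⟩
    · have h := ts_gfp (k := m) (m := n - (m - 1)) (R := R) (by
        have e : m + (n - (m - 1)) = n + 1 := by omega
        rwa [e])
      exact h
    · apply Subtype.ext
      exact hrec.symm

lemma NTS_succ (n : ℕ) : NTS (n + 1) = ∑ j : Fin (n + 1), NTS j * NTS (n - j) := by
  have e := Equiv.ofBijective _ (gmap_bijective n)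
  rw [NTS, ← Nat.card_congr e, my_card_sigma]
  refine Finset.sum_congr rfl fun j _ => ?_
  rw [Nat.card_prod]
  rfl

lemma NTS_eq_catalan : ∀ n, NTS n = catalan n := by
  intro n
  induction n using Nat.strong_induction_on with
  | _ n ih =>
    match n with
    | 0 => simpa using NTS_zero
    | (m + 1) =>
      rw [NTS_succ, catalan_succ]
      refine Finset.sum_congr rfl fun j _ => ?_
      rw [ih j (by omega), ih (m - j) (by omega)]

end Aux3

section Aux4

/-- The decomposition map for transfer systems contained in a concatenation. -/
noncomputable def hmap (k m : ℕ) (Q : ℕ → ℕ → Prop)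
    (p : {R₁ : ℕ → ℕ → Prop // IsTransferSystem k R₁} ×
      {R₂ : ℕ → ℕ → Prop // IsTransferSystem m R₂ ∧ ∀ i j, R₂ i j → Q i j}) :
    {R : ℕ → ℕ → Prop // IsTransferSystem (k + m) R ∧
      ∀ i j, R i j → concatTS k (completeTS k) Q i j} :=
  ⟨concatTS k p.1.1 p.2.1, ts_concat p.1.2 p.2.2.1, concat_sub p.1.2 p.2.2.2⟩

lemma hmap_bijective (k m : ℕ) (Q : ℕ → ℕ → Prop) :
    Function.Bijective (hmap k m Q) := by
  constructor
  · rintro ⟨⟨R₁, h₁⟩, ⟨R₂, h₂, hq⟩⟩ ⟨⟨R₁', h₁'⟩, ⟨R₂', h₂', hq'⟩⟩ hpq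
    simp only [hmap, Subtype.mk.injEq] at hpq
    have hr : R₁ = R₁' := by
      have e1 := restrict_concat h₁ h₂
      have e2 := restrict_concat h₁' h₂'
      rw [← e1, ← e2, hpq]
    have hg : R₂ = R₂' := by
      have e1 := gfp_concat h₁ h₂
      have e2 := gfp_concat h₁' h₂'
      rw [← e1, ← e2, hpq]
    subst hr; subst hg
    rfl
  · rintro ⟨R, hR, hsub⟩
    refine ⟨⟨⟨restrictTS k R, ts_restrict hR (by omega)⟩,
      ⟨gfpTS k R, ts_gfp hR, gfp_sub hsub⟩⟩, ?_⟩
    apply Subtype.ext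
    exact (concat_eq_of_sub hR hsub).symm

lemma count_sub : ∀ (L : List ℕ) (n : ℕ), L.sum = n →
    Nat.card {R : ℕ → ℕ → Prop // IsTransferSystem n R ∧
      ∀ i j, R i j → concatCompletes L i j} = (L.map catalan).prod := by
  intro L
  induction L with
  | nil =>
    intro n hn
    simp only [List.sum_nil] at hn
    subst hn
    simp only [List.map_nil, List.prod_nil]
    rw [Nat.card_eq_one_iff_unique]
    constructor
    · constructor
      rintro ⟨R, hR, _⟩ ⟨S, hS, _⟩
      apply Subtype.ext
      show R = S
      rw [ts_zero_unique hR, ts_zero_unique hS]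
    · exact ⟨⟨_, ts_empty, fun _ _ h => h.elim⟩⟩
  | cons k L ih =>
    intro n hn
    simp only [List.sum_cons] at hn
    subst hn
    have hcc : concatCompletes (k :: L) = concatTS k (completeTS k) (concatCompletes L) := rfl
    rw [hcc]
    have e := Equiv.ofBijective _ (hmap_bijective k L.sum (concatCompletes L))
    rw [← Nat.card_congr e, Nat.card_prod]
    have h1 : Nat.card {R₁ : ℕ → ℕ → Prop // IsTransferSystem k R₁} = catalan k :=
      NTS_eq_catalan k
    rw [h1, ih L.sum rfl]
    simp

end Aux4

/-- If the core of a transfer system `O_a` on `[n]` is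
`O_{n_1}^cpt ⊕ … ⊕ O_{n_k}^cpt` with the `n_i` positive and summing to `n`, then the
number of transfer systems `O_m` on `[n]` with `(O_a, O_m)` compatible equals
`Cat(n_1) · … · Cat(n_k)`. -/
theorem count_compatible_by_core (n : ℕ) (L : List ℕ) (hLne : L ≠ [])
    (hLpos : ∀ k ∈ L, 0 < k) (hLsum : L.sum = n)
    (Oa : ℕ → ℕ → Prop) (ha : IsTransferSystem n Oa)
    (hcore : coreTS n Oa = concatCompletes L) :
    Nat.card {Om : ℕ → ℕ → Prop // IsTransferSystem n Om ∧ Compatible Oa Om} =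
      (L.map catalan).prod := by
  have key : ∀ Om : ℕ → ℕ → Prop,
      (IsTransferSystem n Om ∧ Compatible Oa Om) ↔
      (IsTransferSystem n Om ∧ ∀ i j, Om i j → concatCompletes L i j) := by
    intro Om
    apply and_congr_right
    intro hm
    rw [← hcore]
    exact compat_iff ha hm
  rw [Nat.card_congr (Equiv.subtypeEquivRight key)]
  exact count_sub L n hLsum
end

section
/- Let (s_0, …, s_r) be a Catalan tuple of length n with excess e = n − r − 1, and let k > 0 and ℓ ≥ 0. Then the sequence (s_0, …, s_r, 0, …, 0, k), obtained by appending ℓ zeros followed by k, is a Catalan tuple (of length n + k) if and only if 0 ≤ ℓ ≤ e. -/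
/-- A Catalan tuple of length `n`: a nonempty finite sequence `(s_0, …, s_r)` of
non-negative integers with `s_0 + … + s_j > j` for all `0 ≤ j ≤ r`, total sum `n`, and
last entry positive when `n > 0`. -/
def IsCatalanTuple (n : ℕ) (s : List ℕ) : Prop :=
  s ≠ [] ∧ (∀ j < s.length, j < (s.take (j + 1)).sum) ∧ s.sum = n ∧
  (0 < n → s.getLast? ≠ some 0)

/-- If `(s_0, …, s_r)` is a Catalan tuple of length `n` with excess
`e = n - r - 1 = n - s.length`, `k > 0` and `ℓ ≥ 0`, then appending `ℓ` zeros followed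
by `k` yields a Catalan tuple (of length `n + k`) iff `0 ≤ ℓ ≤ e`. -/
theorem catalanTuple_extension (n : ℕ) (s : List ℕ) (hs : IsCatalanTuple n s)
    (k ℓ : ℕ) (hk : 0 < k) :
    IsCatalanTuple (n + k) (s ++ List.replicate ℓ 0 ++ [k]) ↔ ℓ ≤ n - s.length := by
  obtain ⟨hne, hpre, hsum, _⟩ := hs
  have hslen : 1 ≤ s.length := List.length_pos_iff.mpr hne
  have hln : s.length ≤ n := by
    have := hpre (s.length - 1) (by omega)
    rw [show s.length - 1 + 1 = s.length by omega, List.take_length, hsum] at this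
    omega
  have hulen : (s ++ List.replicate ℓ 0).length = s.length + ℓ := by simp
  have husum : (s ++ List.replicate ℓ 0).sum = n := by simp [hsum]
  constructor
  · rintro ⟨-, h, -, -⟩
    rcases Nat.eq_zero_or_pos ℓ with h0 | h0
    · omega
    · have hj := h (s.length + ℓ - 1) (by simp; omega)
      rw [show s.length + ℓ - 1 + 1 = (s ++ List.replicate ℓ 0).length by simp; omega,
        List.append_assoc, ← List.append_assoc, List.take_left, husum] at hj
      omega
  · intro hℓ
    refine ⟨by simp, ?_, by simp [hsum], fun _ => by simp; omega⟩
    intro j hj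
    simp only [List.length_append, List.length_replicate, List.length_singleton] at hj
    rcases lt_or_ge j s.length with hc | hc
    · have := hpre j hc
      rw [List.append_assoc, List.take_append,
        show j + 1 - s.length = 0 by omega]
      simpa using this
    · rcases lt_or_ge j (s.length + ℓ) with hc2 | hc2
      · rw [List.append_assoc, ← List.append_assoc, List.take_append,
          hulen, show j + 1 - (s.length + ℓ) = 0 by omega, List.take_zero,
          List.append_nil, List.take_append,
          List.take_of_length_le (by omega : s.length ≤ j + 1), List.take_replicate]
        simp [hsum]; omega
      · have hj3 : j = s.length + ℓ := by omega
        rw [List.append_assoc, ← List.append_assoc,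
          List.take_of_length_le (by simp; omega)]
        simp [hsum]; omega
end

section
/- Let k_1, …, k_r be positive integers with sum K. The number of transfer systems O on [K] whose core equals O_{k_1}^cpt ⊕ … ⊕ O_{k_r}^cpt is equal to the number of Catalan tuples of length K whose subsequence of nonzero entries is exactly (k_1, …, k_r). -/
namespace TS19

/-- `t`-th entry of `L`, 1-indexed. -/
def kk (L : List ℕ) (t : ℕ) : ℕ := L.getD (t - 1) 0

/-- partial sum of the first `t` entries. -/
def PP (L : List ℕ) (t : ℕ) : ℕ := (L.take t).sum

lemma PP_zero (L : List ℕ) : PP L 0 = 0 := rfl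

lemma PP_succ (L : List ℕ) {t : ℕ} (ht : t < L.length) :
    PP L (t + 1) = PP L t + kk L (t + 1) := by
  simp only [PP, List.take_succ, List.sum_append, kk]
  have : L[t]? = some L[t] := List.getElem?_eq_getElem ht
  simp [this, List.getD_eq_getElem?_getD]

lemma PP_len (L : List ℕ) : PP L L.length = L.sum := by simp [PP]

lemma PP_mono (L : List ℕ) : Monotone (PP L) := by
  apply monotone_nat_of_le_succ
  intro t
  by_cases ht : t < L.length
  · rw [PP_succ L ht]; omega
  · unfold PP
    rw [List.take_of_length_le (by omega), List.take_of_length_le (by omega)]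

lemma kk_pos {L : List ℕ} (hpos : ∀ k ∈ L, 0 < k) {t : ℕ} (h1 : 1 ≤ t)
    (h2 : t ≤ L.length) : 0 < kk L t := by
  apply hpos
  have : t - 1 < L.length := by omega
  unfold kk
  rw [List.getD_eq_getElem?_getD, List.getElem?_eq_getElem this]
  exact List.getElem_mem this

lemma PP_lt_PP {L : List ℕ} (hpos : ∀ k ∈ L, 0 < k) {t t' : ℕ} (h : t < t')
    (h2 : t' ≤ L.length) : PP L t < PP L t' := by
  have h3 : t + 1 ≤ t' := h
  have := PP_mono L h3
  have hs : PP L (t+1) = PP L t + kk L (t+1) := PP_succ L (by omega)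
  have := kk_pos hpos (t := t + 1) (by omega) (by omega)
  omega

lemma PP_le_sum (L : List ℕ) (t : ℕ) : PP L t ≤ L.sum := by
  by_cases h : t ≤ L.length
  · have := PP_mono L h; rw [PP_len] at this; exact this
  · unfold PP; rw [List.take_of_length_le (by omega)]

lemma lt_of_PP_lt_PP {L : List ℕ} {t t' : ℕ} (h : PP L t < PP L t') : t < t' := by
  by_contra hc
  exact absurd (PP_mono L (by omega : t' ≤ t)) (by omega)

/-- block index of `i`: the unique `t` with `P (t-1) < i ≤ P t`, for `1 ≤ i ≤ sum`. -/
def tOf (L : List ℕ) (i : ℕ) : ℕ := Nat.findGreatest (fun t => PP L t < i) L.length + 1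

lemma tOf_pos (L : List ℕ) (i : ℕ) : 1 ≤ tOf L i := Nat.le_add_left 1 _

lemma tOf_spec1 {L : List ℕ} {i : ℕ} (h1 : 1 ≤ i) : PP L (tOf L i - 1) < i := by
  have : tOf L i - 1 = Nat.findGreatest (fun t => PP L t < i) L.length := by
    unfold tOf; omega
  rw [this]
  exact Nat.findGreatest_spec (P := fun t => PP L t < i) (Nat.zero_le _)
    (show PP L 0 < i by rw [PP_zero]; omega)

lemma tOf_le {L : List ℕ} {i : ℕ} (h1 : 1 ≤ i) (h2 : i ≤ L.sum) : tOf L i ≤ L.length := by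
  have hne : L.length ≠ 0 := by
    intro h0
    have : L = [] := List.length_eq_zero_iff.mp h0
    subst this; simp at h2; omega
  suffices h : Nat.findGreatest (fun t => PP L t < i) L.length ≠ L.length by
    have := Nat.findGreatest_le (P := fun t => PP L t < i) (n := L.length)
    unfold tOf; omega
  intro heq
  have : PP L L.length < i := by
    have := Nat.findGreatest_spec (P := fun t => PP L t < i) (Nat.zero_le L.length)
      (show PP L 0 < i by rw [PP_zero]; omega)
    rwa [heq] at this
  rw [PP_len] at this; omega

lemma tOf_spec2 {L : List ℕ} {i : ℕ} (h1 : 1 ≤ i) (h2 : i ≤ L.sum) : i ≤ PP L (tOf L i) := by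
  by_contra hc
  have hle := tOf_le h1 h2
  have h3 : tOf L i ≤ Nat.findGreatest (fun t => PP L t < i) L.length :=
    Nat.le_findGreatest (n := L.length) (by unfold tOf at hle ⊢; omega) (by omega)
  unfold tOf at h3; omega

lemma tOf_eq {L : List ℕ} (hpos : ∀ k ∈ L, 0 < k) {i t : ℕ} (h1 : 1 ≤ t)
    (h2 : t ≤ L.length) (h3 : PP L (t - 1) < i) (h4 : i ≤ PP L t) : tOf L i = t := by
  have hi1 : 1 ≤ i := by omega
  have hi2 : i ≤ L.sum := le_trans h4 (PP_le_sum L t)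
  have hA : t - 1 ≤ Nat.findGreatest (fun t => PP L t < i) L.length :=
    Nat.le_findGreatest (by omega) h3
  have hB : tOf L i ≤ t := by
    by_contra hc
    have h5 := tOf_spec1 (L := L) hi1
    have : PP L t ≤ PP L (tOf L i - 1) := PP_mono L (by omega)
    omega
  unfold tOf at *; omega

lemma tOf_mono {L : List ℕ} {i j : ℕ} (h1 : 1 ≤ i) (hij : i ≤ j) : tOf L i ≤ tOf L j := by
  have h3 : PP L (tOf L i - 1) < j := lt_of_lt_of_le (tOf_spec1 h1) hij
  have := Nat.le_findGreatest (P := fun t => PP L t < j) (n := L.length)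
    (m := tOf L i - 1) ?_ h3
  · unfold tOf at *; omega
  · have := Nat.findGreatest_le (P := fun t => PP L t < i) (n := L.length)
    unfold tOf; omega

lemma tOf_PP {L : List ℕ} (hpos : ∀ k ∈ L, 0 < k) {t : ℕ} (h1 : 1 ≤ t)
    (h2 : t ≤ L.length) : tOf L (PP L t) = t :=
  tOf_eq hpos h1 h2 (PP_lt_PP hpos (by omega) h2) le_rfl

/-- min of `C` over `[t, m]` (equals `C t` if `m ≤ t`). -/
def minR (C : ℕ → ℕ) (t : ℕ) : ℕ → ℕ
  | 0 => C t
  | m + 1 => if m + 1 ≤ t then C t else min (minR C t m) (C (m + 1))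

lemma minR_le_left (C : ℕ → ℕ) (t m : ℕ) : minR C t m ≤ C t := by
  induction m with
  | zero => simp [minR]
  | succ m ih =>
    unfold minR
    split
    · exact le_rfl
    · exact le_trans (min_le_left _ _) ih

lemma minR_le (C : ℕ → ℕ) {t u m : ℕ} (h1 : t ≤ u) (h2 : u ≤ m) : minR C t m ≤ C u := by
  induction m with
  | zero =>
    have : u = 0 := by omega
    subst this
    have : t = 0 := by omega
    subst this; simp [minR]
  | succ m ih =>
    unfold minR
    split
    · have : u = t := by omega
      subst this; exact le_rfl
    · rcases Nat.lt_or_ge u (m + 1) with h | h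
      · exact le_trans (min_le_left _ _) (ih (by omega))
      · have : u = m + 1 := by omega
        subst this; exact min_le_right _ _
lemma le_minR (C : ℕ → ℕ) {t m x : ℕ} (ht : x ≤ C t)
    (h : ∀ u, t < u → u ≤ m → x ≤ C u) : x ≤ minR C t m := by
  induction m with
  | zero => simpa [minR] using ht
  | succ m ih =>
    unfold minR
    split
    · exact ht
    · exact le_min (ih (fun u hu1 hu2 => h u hu1 (by omega))) (h (m+1) (by omega) le_rfl)

lemma minR_succ (C : ℕ → ℕ) {t m : ℕ} (h : t ≤ m) :
    minR C t (m + 1) = min (minR C t m) (C (m + 1)) := by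
  rw [show minR C t (m + 1) = if m + 1 ≤ t then C t else min (minR C t m) (C (m + 1)) from rfl,
    if_neg (by omega)]

lemma minR_self (C : ℕ → ℕ) (t : ℕ) : minR C t t = C t := by
  cases t with
  | zero => rfl
  | succ m =>
    rw [show minR C (m+1) (m + 1) = if m + 1 ≤ m + 1 then C (m+1)
      else min (minR C (m+1) m) (C (m + 1)) from rfl, if_pos le_rfl]

lemma minR_anti (C : ℕ → ℕ) {t m m' : ℕ} (h1 : t ≤ m') (h2 : m' ≤ m) :
    minR C t m ≤ minR C t m' := by
  apply le_minR
  · exact minR_le_left C t m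
  · intro u hu1 hu2
    exact minR_le C (by omega) (by omega)

end TS19

/-! ### Part 2: the explicit transfer system attached to a crossing vector -/

namespace TS19

/-- "rank" of `i` in the chain of arrows crossing its block boundary. -/
def qval (L : List ℕ) (C : ℕ → ℕ) (i : ℕ) : ℕ :=
  min (C (tOf L i - 1)) (C (tOf L i)) + (i - PP L (tOf L i - 1))

/-- `i` is the source of an arrow crossing the `m`-th breakpoint. -/
def Cross (L : List ℕ) (C : ℕ → ℕ) (i m : ℕ) : Prop :=
  1 ≤ i ∧ i ≤ PP L m ∧ tOf L i ≤ m ∧ qval L C i ≤ minR C (tOf L i) m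

/-- The transfer system associated to a crossing vector `C`. -/
def Rel (L : List ℕ) (C : ℕ → ℕ) (i j : ℕ) : Prop :=
  1 ≤ i ∧ i ≤ j ∧ j ≤ L.sum ∧
    ∀ m, 1 ≤ m → m + 1 ≤ L.length → i ≤ PP L m → PP L m < j → Cross L C i m

/-- Validity of a crossing vector. -/
def Ok (ks : List ℕ) (C : ℕ → ℕ) : Prop :=
  (∀ m, ks.length ≤ m → C m = 0) ∧
  ∀ m, 1 ≤ m → m + 1 ≤ ks.length → C m + 1 ≤ C (m - 1) + kk ks m

variable {L : List ℕ} {C : ℕ → ℕ}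

lemma cross_restrict {i m m' : ℕ} (h : Cross L C i m) (h1 : tOf L i ≤ m') (h2 : m' ≤ m) :
    Cross L C i m' := by
  obtain ⟨hi1, hi2, hi3, hi4⟩ := h
  refine ⟨hi1, ?_, h1, le_trans hi4 (minR_anti C h1 h2)⟩
  calc i ≤ PP L (tOf L i) := tOf_spec2 hi1 (le_trans hi2 (PP_le_sum L m))
  _ ≤ PP L m' := PP_mono L h1

lemma cross_same_block {i j m : ℕ} (h : Cross L C j m) (h1i : 1 ≤ i) (hij : i ≤ j)
    (hblk : tOf L i = tOf L j) : Cross L C i m := by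
  obtain ⟨hj1, hj2, hj3, hj4⟩ := h
  refine ⟨h1i, le_trans hij hj2, hblk ▸ hj3, ?_⟩
  rw [show qval L C i = min (C (tOf L j - 1)) (C (tOf L j)) + (i - PP L (tOf L j - 1)) by
    rw [qval, hblk], show minR C (tOf L i) m = minR C (tOf L j) m by rw [hblk]]
  have : i - PP L (tOf L j - 1) ≤ j - PP L (tOf L j - 1) := by omega
  unfold qval at hj4
  omega

lemma cross_step {i j m : ℕ} (h1 : Cross L C i m) (h2 : Cross L C j (m + 1))
    (hlt : tOf L i < tOf L j) : Cross L C i (m + 1) := by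
  obtain ⟨hi1, hi2, hi3, hi4⟩ := h1
  obtain ⟨hj1, hj2, hj3, hj4⟩ := h2
  have hoff : 1 ≤ j - PP L (tOf L j - 1) := by
    have := tOf_spec1 (L := L) hj1; omega
  have hqj1 : min (C (tOf L j - 1)) (C (tOf L j)) + 1 ≤ qval L C j := by
    unfold qval; omega
  have hqj2 : qval L C j ≤ C (tOf L j) := le_trans hj4 (minR_le C le_rfl hj3)
  have hmin : min (C (tOf L j - 1)) (C (tOf L j)) = C (tOf L j - 1) := by
    rcases le_total (C (tOf L j - 1)) (C (tOf L j)) with h | h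
    · exact min_eq_left h
    · rw [min_eq_right h] at hqj1 ⊢
      omega
  have hqjC : qval L C j ≤ C (m + 1) := le_trans hj4 (minR_le C hj3 le_rfl)
  have hiC : qval L C i ≤ C (tOf L j - 1) :=
    le_trans hi4 (minR_le C (by omega) (by omega))
  refine ⟨hi1, ?_, by omega, ?_⟩
  · calc i ≤ PP L m := hi2
    _ ≤ PP L (m+1) := PP_mono L (by omega)
  · rw [minR_succ C hi3]
    have : qval L C i ≤ C (m + 1) := by omega
    exact le_min hi4 this

lemma rel_refl {i : ℕ} (h1 : 1 ≤ i) (h2 : i ≤ L.sum) : Rel L C i i :=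
  ⟨h1, le_rfl, h2, fun m _ _ him hmi => absurd (lt_of_le_of_lt him hmi) (lt_irrefl i)⟩

lemma rel_trans {i j l : ℕ} (hab : Rel L C i j) (hbc : Rel L C j l) : Rel L C i l := by
  obtain ⟨hi1, hij, hjK, hcond1⟩ := hab
  obtain ⟨hj1, hjl, hlK, hcond2⟩ := hbc
  refine ⟨hi1, le_trans hij hjl, hlK, ?_⟩
  intro m hm1 hm2 him hml
  by_cases hjm : PP L m < j
  · exact hcond1 m hm1 hm2 him hjm
  · push_neg at hjm
    have hjsum : j ≤ L.sum := le_trans hjl hlK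
    have htj1 : 1 ≤ tOf L j := tOf_pos L j
    have htj_le_m : tOf L j ≤ m := by
      have h5 := tOf_spec1 (L := L) hj1
      have := lt_of_PP_lt_PP (L := L) (lt_of_lt_of_le h5 hjm)
      omega
    have hcrossj : ∀ m', tOf L j ≤ m' → m' ≤ m → Cross L C j m' := by
      intro m' ha hb
      refine hcond2 m' (by omega) (by omega) ?_ ?_
      · exact le_trans (tOf_spec2 hj1 hjsum) (PP_mono L ha)
      · exact lt_of_le_of_lt (PP_mono L hb) hml
    by_cases hblk : tOf L i = tOf L j
    · exact cross_same_block (hcrossj m htj_le_m le_rfl) hi1 hij hblk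
    · have hlt : tOf L i < tOf L j := lt_of_le_of_ne (tOf_mono hi1 hij) hblk
      have hti1 : 1 ≤ tOf L i := tOf_pos L i
      have hbase : Cross L C i (tOf L j - 1) := by
        refine hcond1 (tOf L j - 1) (by omega) (by omega) ?_ ?_
        · calc i ≤ PP L (tOf L i) := tOf_spec2 hi1 (le_trans hij hjsum)
          _ ≤ PP L (tOf L j - 1) := PP_mono L (by omega)
        · exact tOf_spec1 hj1
      have hladder : ∀ n, tOf L j - 1 + n ≤ m → Cross L C i (tOf L j - 1 + n) := by
        intro n
        induction n with
        | zero => intro _; exact hbase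
        | succ n ih =>
          intro hn
          have h2 : Cross L C j (tOf L j - 1 + n + 1) := hcrossj _ (by omega) (by omega)
          exact cross_step (ih (by omega)) h2 hlt
      have := hladder (m - (tOf L j - 1)) (by omega)
      rwa [show tOf L j - 1 + (m - (tOf L j - 1)) = m by omega] at this

lemma rel_isTS : IsTransferSystem L.sum (Rel L C) := by
  refine ⟨fun i h1 h2 => rel_refl h1 h2, fun i j l hab hbc => rel_trans hab hbc,
    fun i j h => ⟨h.1, h.2.1, h.2.2.1⟩, ?_⟩
  intro i j l h hik hkj
  obtain ⟨h1, h2, h3, h4⟩ := h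
  exact ⟨h1, hik, le_trans hkj h3, fun m hm1 hm2 him hml =>
    h4 m hm1 hm2 him (lt_of_lt_of_le hml hkj)⟩

lemma rel_succ_iff (hpos : ∀ k ∈ L, 0 < k) (hOk : Ok L C) {m : ℕ} (h1 : 1 ≤ m)
    (h2 : m < L.sum) :
    Rel L C m (m + 1) ↔ ∀ t, 1 ≤ t → t + 1 ≤ L.length → PP L t ≠ m := by
  constructor
  · rintro ⟨-, -, -, h4⟩ t ht1 ht2 hPt
    have hcross : Cross L C m t := h4 t ht1 ht2 (le_of_eq hPt.symm) (by omega)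
    obtain ⟨-, -, -, hq⟩ := hcross
    have htOf : tOf L m = t := hPt ▸ tOf_PP hpos ht1 (by omega)
    rw [htOf] at hq
    have hPs : PP L t = PP L (t - 1) + kk L t := by
      have := PP_succ L (t := t - 1) (by omega)
      rw [show t - 1 + 1 = t by omega] at this
      exact this
    have hkpos : 0 < kk L t := kk_pos hpos ht1 (by omega)
    have hqv : qval L C m = min (C (t - 1)) (C t) + kk L t := by
      rw [qval, htOf, ← hPt, hPs]
      omega
    have hminR : minR C t t = C t := minR_self C t
    have hstep := hOk.2 t ht1 ht2
    have := minR_le C (le_rfl : t ≤ t) (le_rfl : t ≤ t)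
    rcases le_total (C (t - 1)) (C t) with hc | hc
    · rw [min_eq_left hc] at hqv
      have : qval L C m ≤ C t := le_trans hq (by rw [hminR])
      omega
    · rw [min_eq_right hc] at hqv
      have : qval L C m ≤ C t := le_trans hq (by rw [hminR])
      omega
  · intro h
    refine ⟨h1, by omega, by omega, ?_⟩
    intro m' hm1 hm2 hle hgt
    exact absurd (by omega : PP L m' = m) (h m' hm1 hm2)

end TS19

namespace TS19

lemma PP_cons (a : ℕ) (l : List ℕ) {t : ℕ} (h : 1 ≤ t) :
    PP (a :: l) t = a + PP l (t - 1) := by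
  obtain ⟨t', rfl⟩ : ∃ t', t = t' + 1 := ⟨t - 1, by omega⟩
  simp [PP, List.take_succ_cons]

/-- Characterization of concatenations of complete transfer systems. -/
lemma concat_iff (L' : List ℕ) (hpos : ∀ k ∈ L', 0 < k) (i j : ℕ) :
    concatCompletes L' i j ↔ (1 ≤ i ∧ i ≤ j ∧ j ≤ L'.sum ∧
      ∀ t, 1 ≤ t → t + 1 ≤ L'.length → PP L' t < j → i ≤ PP L' t → False) := by
  induction L' generalizing i j with
  | nil =>
    simp only [concatCompletes, List.sum_nil]
    constructor
    · intro h; exact h.elim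
    · intro ⟨h1, h2, h3, _⟩; omega
  | cons a L'' ih =>
    have hpos'' : ∀ k ∈ L'', 0 < k := fun k hk => hpos k (List.mem_cons_of_mem a hk)
    have hsum : (a :: L'').sum = a + L''.sum := List.sum_cons
    constructor
    · rintro (⟨hja, h1, h2, h3⟩ | ⟨hai, hcc⟩)
      · refine ⟨h1, h2, by omega, ?_⟩
        intro t ht1 _ hPlt hile
        rw [PP_cons a L'' ht1] at hPlt
        omega
      · obtain ⟨g1, g2, g3, g4⟩ := (ih hpos'' _ _).mp hcc
        refine ⟨by omega, by omega, by omega, ?_⟩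
        intro t ht1 ht2 hPlt hile
        rcases Nat.eq_or_lt_of_le ht1 with h | h
        · rw [PP_cons a L'' ht1, ← h] at hile
          simp [PP_zero] at hile
          omega
        · rw [PP_cons a L'' ht1] at hPlt hile
          exact g4 (t - 1) (by omega) (by simp at ht2 ⊢; omega)
            (by omega) (by omega)
    · rintro ⟨h1, h2, h3, h4⟩
      by_cases hj : j ≤ a
      · exact Or.inl ⟨hj, h1, h2, hj⟩
      · right
        have hne'' : L'' ≠ [] := by
          intro h0
          subst h0
          simp only [List.sum_cons, List.sum_nil, Nat.add_zero] at h3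
          omega
        have hlen : 2 ≤ (a :: L'').length := by
          cases L'' with
          | nil => exact absurd rfl hne''
          | cons b l => simp
        have hai : a + 1 ≤ i := by
          by_contra hc
          exact h4 1 le_rfl hlen (by rw [PP_cons a L'' le_rfl]; simp [PP_zero]; omega)
            (by rw [PP_cons a L'' le_rfl]; simp [PP_zero]; omega)
        refine ⟨hai, (ih hpos'' _ _).mpr ⟨by omega, by omega, by omega, ?_⟩⟩
        intro t ht1 ht2 hPlt hile
        refine h4 (t + 1) (by omega) (by simp; omega) ?_ ?_
        · rw [PP_cons a L'' (by omega)]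
          simp only [Nat.add_sub_cancel]
          omega
        · rw [PP_cons a L'' (by omega)]
          simp only [Nat.add_sub_cancel]
          omega

variable {L : List ℕ} {C : ℕ → ℕ}

/-- The core of `Rel L C` is the concatenation of completes. -/
lemma rel_core (hpos : ∀ k ∈ L, 0 < k) (hOk : Ok L C) :
    coreTS L.sum (Rel L C) = concatCompletes L := by
  funext i j
  apply propext
  rw [concat_iff L hpos i j]
  constructor
  · rintro ⟨h1, h2, h3, h4⟩
    refine ⟨h1, h2, h3, ?_⟩
    intro t ht1 ht2 hPlt hile
    have hrel : Rel L C (PP L t) (PP L t + 1) := h4 (PP L t) hile hPlt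
    have h5 : 1 ≤ PP L t := by omega
    have h6 : PP L t < L.sum := by omega
    exact absurd rfl ((rel_succ_iff hpos hOk h5 h6).mp hrel t ht1 ht2)
  · rintro ⟨h1, h2, h3, h4⟩
    refine ⟨h1, h2, h3, ?_⟩
    intro m hm1 hm2
    refine (rel_succ_iff hpos hOk (by omega) (by omega)).mpr ?_
    intro t ht1 ht2 hPt
    exact h4 t ht1 ht2 (by omega) (by omega)

/-! ### Abstract transfer systems with prescribed core -/

section Abstract

variable {O : ℕ → ℕ → Prop} (hO : IsTransferSystem L.sum O)
  (hcore : coreTS L.sum O = concatCompletes L)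
  (hpos : ∀ k ∈ L, 0 < k)

include hO hcore hpos

/-- Consecutive arrows of `O` are exactly the non-breakpoints. -/
lemma o_succ_iff {m : ℕ} (h1 : 1 ≤ m) (h2 : m < L.sum) :
    O m (m + 1) ↔ ∀ t, 1 ≤ t → t + 1 ≤ L.length → PP L t ≠ m := by
  have hc : coreTS L.sum O m (m + 1) ↔ concatCompletes L m (m + 1) := by rw [hcore]
  rw [concat_iff L hpos m (m + 1)] at hc
  constructor
  · intro hOm t ht1 ht2 hPt
    have : coreTS L.sum O m (m + 1) := by
      refine ⟨h1, by omega, by omega, ?_⟩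
      intro m' hm1 hm2
      have : m' = m := by omega
      subst this; exact hOm
    obtain ⟨-, -, -, h4⟩ := hc.mp this
    exact h4 t ht1 ht2 (by omega) (by omega)
  · intro hnb
    have hR : coreTS L.sum O m (m + 1) := by
      apply hc.mpr
      refine ⟨h1, by omega, by omega, ?_⟩
      intro t ht1 ht2 hPlt hile
      exact absurd (by omega : PP L t = m) (hnb t ht1 ht2)
    obtain ⟨-, -, -, h4⟩ := hR
    exact h4 m le_rfl (by omega)

/-- If there is no breakpoint in `[i, j)` then `i → j`. -/
lemma o_run {i j : ℕ} (h1 : 1 ≤ i) (hij : i ≤ j) (hjK : j ≤ L.sum)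
    (hnb : ∀ t, 1 ≤ t → t + 1 ≤ L.length → ¬(i ≤ PP L t ∧ PP L t < j)) : O i j := by
  obtain ⟨n, rfl⟩ : ∃ n, j = i + n := ⟨j - i, by omega⟩
  clear hij
  induction n with
  | zero => exact hO.1 i h1 (by omega)
  | succ n ih =>
    have hstep : O (i + n) (i + n + 1) := by
      refine (o_succ_iff hO hcore hpos (by omega) (by omega)).mpr ?_
      intro t ht1 ht2 hPt
      exact hnb t ht1 ht2 ⟨by omega, by omega⟩
    exact hO.2.1 i (i + n) (i + n + 1)
      (ih (by omega) (fun t ht1 ht2 h => hnb t ht1 ht2 ⟨h.1, by omega⟩)) hstep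

end Abstract

end TS19

namespace TS19

open Classical in
/-- The set of sources of arrows of `O` crossing the `m`-th breakpoint. -/
noncomputable def XS (L : List ℕ) (O : ℕ → ℕ → Prop) (m : ℕ) : Finset ℕ :=
  (Finset.Icc 1 (PP L m)).filter (fun i => O i (PP L m + 1))

open Classical in
lemma mem_XS {L : List ℕ} {O : ℕ → ℕ → Prop} {i m : ℕ} :
    i ∈ XS L O m ↔ 1 ≤ i ∧ i ≤ PP L m ∧ O i (PP L m + 1) := by
  simp [XS, Finset.mem_filter, Finset.mem_Icc, and_assoc]

/-- The crossing vector of an abstract transfer system. -/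
noncomputable def Phi (L : List ℕ) (O : ℕ → ℕ → Prop) (m : ℕ) : ℕ :=
  if 1 ≤ m ∧ m + 1 ≤ L.length then (XS L O m).card else 0

open Classical in
/-- The explicit crossing set of a crossing vector. -/
noncomputable def ES (L : List ℕ) (C : ℕ → ℕ) (m : ℕ) : Finset ℕ :=
  (Finset.Icc 1 (PP L m)).filter (fun i => Cross L C i m)

open Classical in
lemma mem_ES {L : List ℕ} {C : ℕ → ℕ} {i m : ℕ} :
    i ∈ ES L C m ↔ Cross L C i m := by
  simp only [ES, Finset.mem_filter, Finset.mem_Icc]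
  constructor
  · exact fun h => h.2
  · exact fun h => ⟨⟨h.1, h.2.1⟩, h⟩

lemma XS_zero (L : List ℕ) (O : ℕ → ℕ → Prop) : XS L O 0 = ∅ := by
  unfold XS
  rw [PP_zero]
  simp

section Abstract

variable {L : List ℕ} {O : ℕ → ℕ → Prop} (hO : IsTransferSystem L.sum O)
  (hcore : coreTS L.sum O = concatCompletes L)
  (hpos : ∀ k ∈ L, 0 < k)

include hO hcore hpos

lemma bp_not_mem_XS {t m : ℕ} (ht1 : 1 ≤ t) (ht2 : t + 1 ≤ L.length)
    (hm : m + 1 ≤ L.length) : PP L t ∉ XS L O m := by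
  intro hmem
  obtain ⟨h1, h2, hOx⟩ := mem_XS.mp hmem
  have hPtK : PP L t < L.sum := by
    have := PP_lt_PP hpos (show t < L.length by omega) le_rfl
    rwa [PP_len] at this
  have hOsucc : O (PP L t) (PP L t + 1) :=
    hO.2.2.2 (PP L t) (PP L m + 1) (PP L t + 1) hOx (by omega) (by omega)
  exact ((o_succ_iff hO hcore hpos h1 hPtK).mp hOsucc t ht1 ht2) rfl

omit hcore hpos in
lemma XS_restrict {i m m' : ℕ} (hi : i ∈ XS L O m) (hmm : m' ≤ m)
    (hle : i ≤ PP L m') : i ∈ XS L O m' := by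
  obtain ⟨h1, h2, hOx⟩ := mem_XS.mp hi
  refine mem_XS.mpr ⟨h1, hle, ?_⟩
  exact hO.2.2.2 i (PP L m + 1) (PP L m' + 1) hOx (by omega)
    (by have := PP_mono L hmm; omega)

lemma xs_star {i j m : ℕ} (hm : m + 2 ≤ L.length) (hi : i ∈ XS L O m)
    (hj : j ∈ XS L O (m + 1)) (hij : i ≤ j) : i ∈ XS L O (m + 1) := by
  obtain ⟨hi1, hi2, hOi⟩ := mem_XS.mp hi
  obtain ⟨hj1, hj2, hOj⟩ := mem_XS.mp hj
  have hsum : PP L (m + 1) + 1 ≤ L.sum := by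
    have := PP_lt_PP hpos (show m + 1 < L.length by omega) le_rfl
    rw [PP_len] at this; omega
  have hOij : O i j := by
    rcases le_or_gt j (PP L m) with h | h
    · exact hO.2.2.2 i (PP L m + 1) j hOi hij (by omega)
    · have hrun : O (PP L m + 1) j := by
        refine o_run hO hcore hpos (by omega) (by omega) (by omega) ?_
        rintro t ht1 ht2 ⟨ha, hb⟩
        have h3 : m < t := lt_of_PP_lt_PP (L := L) (by omega)
        have h4 : t < m + 1 := lt_of_PP_lt_PP (L := L) (lt_of_lt_of_le hb hj2)
        omega
      exact hO.2.1 i (PP L m + 1) j hOi hrun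
  exact mem_XS.mpr ⟨hi1, le_trans hij hj2, hO.2.1 i j (PP L (m+1) + 1) hOij hOj⟩

/-- Elements of a block below a member of `XS n` are also in `XS n`. -/
lemma xs_block_lower {n i i' : ℕ} (hi : i ∈ XS L O n) (h1 : PP L (n - 1) < i')
    (h2 : i' ≤ i) : i' ∈ XS L O n := by
  obtain ⟨hi1, hi2, hOi⟩ := mem_XS.mp hi
  have hrun : O i' i := by
    refine o_run hO hcore hpos (by omega) h2 (le_trans hi2 (PP_le_sum L n)) ?_
    rintro t ht1 ht2 ⟨ha, hb⟩
    have h3 : n - 1 < t := lt_of_PP_lt_PP (L := L) (by omega)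
    have h4 : t < n := lt_of_PP_lt_PP (L := L) (lt_of_lt_of_le hb hi2)
    omega
  exact mem_XS.mpr ⟨by omega, le_trans h2 hi2, hO.2.1 i' i (PP L n + 1) hrun hOi⟩

omit hO hcore hpos in
lemma card_XS_pred {m : ℕ} (hm1 : 1 ≤ m) (hm2 : m + 1 ≤ L.length) :
    (XS L O (m - 1)).card = Phi L O (m - 1) := by
  unfold Phi
  split
  · rfl
  · next h =>
    have : m - 1 = 0 := by omega
    rw [this, XS_zero]
    rfl

lemma ok_Phi : Phi L O 0 = 0 ∧ Ok L (Phi L O) := by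
  refine ⟨by simp [Phi], fun m hm => by simp [Phi]; omega, ?_⟩
  intro m hm1 hm2
  have hsub : XS L O m ⊆ XS L O (m - 1) ∪ Finset.Icc (PP L (m - 1) + 1) (PP L m - 1) := by
    intro i hi
    obtain ⟨h1, h2, hOx⟩ := mem_XS.mp hi
    rcases le_or_gt i (PP L (m - 1)) with h | h
    · exact Finset.mem_union_left _ (XS_restrict hO hi (by omega) h)
    · have hne : i ≠ PP L m := by
        intro heq
        exact bp_not_mem_XS hO hcore hpos hm1 hm2 hm2 (heq ▸ hi)
      exact Finset.mem_union_right _ (Finset.mem_Icc.mpr ⟨by omega, by omega⟩)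
  have hcard := le_trans (Finset.card_le_card hsub) (Finset.card_union_le _ _)
  have hIcc : (Finset.Icc (PP L (m - 1) + 1) (PP L m - 1)).card = kk L m - 1 := by
    rw [Nat.card_Icc]
    have hPs : PP L m = PP L (m - 1) + kk L m := by
      have := PP_succ L (t := m - 1) (by omega)
      rwa [show m - 1 + 1 = m by omega] at this
    omega
  have hkpos : 0 < kk L m := kk_pos hpos hm1 (by omega)
  have hXm : Phi L O m = (XS L O m).card := by unfold Phi; rw [if_pos ⟨hm1, hm2⟩]
  have hXm1 := card_XS_pred (O := O) hm1 hm2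
  omega

end Abstract

/-! ### The cardinality of the explicit crossing set -/

lemma qval_lt {L : List ℕ} {C : ℕ → ℕ} {a b m : ℕ} (ha : Cross L C a m)
    (hb : Cross L C b m) (hab : a < b) : qval L C a < qval L C b := by
  obtain ⟨ha1, ha2, ha3, ha4⟩ := ha
  obtain ⟨hb1, hb2, hb3, hb4⟩ := hb
  have hsum : b ≤ L.sum := le_trans hb2 (PP_le_sum L m)
  have htab : tOf L a ≤ tOf L b := tOf_mono ha1 (by omega)
  have hoffb : PP L (tOf L b - 1) < b := tOf_spec1 hb1
  rcases eq_or_lt_of_le htab with heq | hlt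
  · have hoffa : PP L (tOf L a - 1) < a := tOf_spec1 ha1
    unfold qval
    rw [heq]
    rw [heq] at hoffa
    omega
  · have hqa : qval L C a ≤ C (tOf L b - 1) := le_trans ha4 (minR_le C (by omega) (by omega))
    have hqb1 : min (C (tOf L b - 1)) (C (tOf L b)) + 1 ≤ qval L C b := by unfold qval; omega
    have hqb2 : qval L C b ≤ C (tOf L b) := le_trans hb4 (minR_le C le_rfl hb3)
    rcases le_total (C (tOf L b - 1)) (C (tOf L b)) with h | h
    · rw [min_eq_left h] at hqb1; omega
    · rw [min_eq_right h] at hqb1; omega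

lemma card_ES {L : List ℕ} {C : ℕ → ℕ} (hpos : ∀ k ∈ L, 0 < k) (hC0 : C 0 = 0)
    (hOk : Ok L C) {m : ℕ} (hm : m + 1 ≤ L.length) : (ES L C m).card = C m := by
  rw [show C m = (Finset.Icc 1 (C m)).card by rw [Nat.card_Icc]; omega]
  apply Finset.card_bij (fun a _ => qval L C a)
  · intro a ha
    have hc := mem_ES.mp ha
    obtain ⟨h1, h2, h3, h4⟩ := hc
    have hoff : PP L (tOf L a - 1) < a := tOf_spec1 h1
    refine Finset.mem_Icc.mpr ⟨by unfold qval; omega, ?_⟩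
    exact le_trans h4 (minR_le C h3 le_rfl)
  · intro a₁ ha₁ a₂ ha₂ heq
    by_contra hne
    rcases Nat.lt_or_ge a₁ a₂ with h | h
    · exact absurd heq (Nat.ne_of_lt (qval_lt (mem_ES.mp ha₁) (mem_ES.mp ha₂) h))
    · have : a₂ < a₁ := by omega
      exact absurd heq.symm (Nat.ne_of_lt (qval_lt (mem_ES.mp ha₂) (mem_ES.mp ha₁) this))
  · intro v hv
    obtain ⟨hv1, hv2⟩ := Finset.mem_Icc.mp hv
    have hm1 : 1 ≤ m := by
      by_contra h
      have : m = 0 := by omega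
      rw [this, hC0] at hv2
      omega
    set t := Nat.findGreatest (fun t' => min (C (t' - 1)) (C t') < v) m with hT
    have hpred1 : min (C (1 - 1)) (C 1) < v := by
      rw [show (1:ℕ) - 1 = 0 from rfl, hC0, min_eq_left (Nat.zero_le _)]
      omega
    have ht1 : 1 ≤ t :=
      Nat.le_findGreatest (P := fun t' => min (C (t' - 1)) (C t') < v) hm1 hpred1
    have htm : t ≤ m := Nat.findGreatest_le m
    have hspec : min (C (t - 1)) (C t) < v :=
      Nat.findGreatest_spec (P := fun t' => min (C (t' - 1)) (C t') < v) (m := 1) hm1 hpred1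
    have hCt : v ≤ C t := by
      rcases eq_or_lt_of_le htm with heq | hlt
      · rw [heq]; exact hv2
      · have := Nat.findGreatest_is_greatest (k := t + 1) (P := fun t' => min (C (t' - 1)) (C t') < v)
          (n := m) (by omega) (by omega)
        simp only [Nat.add_sub_cancel, not_lt] at this
        exact le_trans this (min_le_left _ _)
    have hCt1 : C (t - 1) < v := by
      rcases le_total (C (t - 1)) (C t) with h | h
      · rwa [min_eq_left h] at hspec
      · rw [min_eq_right h] at hspec; omega
    have hstep := hOk.2 t ht1 (by omega)
    have hkk : v - C (t - 1) ≤ kk L t - 1 := by omega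
    have hPs : PP L t = PP L (t - 1) + kk L t := by
      have := PP_succ L (t := t - 1) (show t - 1 < L.length by omega)
      rwa [show t - 1 + 1 = t by omega] at this
    set i := PP L (t - 1) + (v - C (t - 1)) with hi
    have hiPt : i ≤ PP L t := by omega
    have htOf : tOf L i = t := tOf_eq hpos ht1 (by omega) (by omega) hiPt
    have hqv : qval L C i = v := by
      unfold qval
      rw [htOf, min_eq_left (by omega)]
      omega
    have hcross : Cross L C i m := by
      refine ⟨by omega, le_trans hiPt (PP_mono L htm), by omega, ?_⟩
      rw [htOf, hqv]
      refine le_minR C hCt ?_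
      intro u hu1 hu2
      have := Nat.findGreatest_is_greatest (k := u) (P := fun t' => min (C (t' - 1)) (C t') < v)
        (n := m) (by omega) hu2
      simp only [not_lt] at this
      exact le_trans this (min_le_right _ _)
    exact ⟨i, mem_ES.mpr hcross, hqv⟩

end TS19

namespace TS19

/-- A downward-closed subset of `[a+1, b]` is an initial segment. -/
lemma lower_eq {S : Finset ℕ} {a b : ℕ} (hsub : S ⊆ Finset.Icc (a + 1) b)
    (hlow : ∀ x ∈ S, ∀ y, a + 1 ≤ y → y ≤ x → y ∈ S) :
    S = Finset.Icc (a + 1) (a + S.card) := by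
  have h1 : S ⊆ Finset.Icc (a + 1) (a + S.card) := by
    intro x hx
    have hx1 := Finset.mem_Icc.mp (hsub hx)
    have hIcc : Finset.Icc (a + 1) x ⊆ S := by
      intro y hy
      have := Finset.mem_Icc.mp hy
      exact hlow x hx y this.1 this.2
    have := Finset.card_le_card hIcc
    rw [Nat.card_Icc] at this
    exact Finset.mem_Icc.mpr ⟨hx1.1, by omega⟩
  refine (Finset.eq_of_subset_of_card_le h1 ?_).symm.symm
  rw [Nat.card_Icc]
  omega

variable {L : List ℕ} {C : ℕ → ℕ}

lemma qval_bounds {i m : ℕ} (h : Cross L C i m) :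
    1 ≤ qval L C i ∧ qval L C i ≤ C m := by
  obtain ⟨h1, h2, h3, h4⟩ := h
  have hoff := tOf_spec1 (L := L) h1
  exact ⟨by unfold qval; omega, le_trans h4 (minR_le C h3 le_rfl)⟩

lemma qval_surj (hpos : ∀ k ∈ L, 0 < k) (hC0 : C 0 = 0) (hOk : Ok L C) {m v : ℕ}
    (hm : m + 1 ≤ L.length) (hv1 : 1 ≤ v) (hv2 : v ≤ C m) :
    ∃ i, Cross L C i m ∧ qval L C i = v := by
  have hm1 : 1 ≤ m := by
    by_contra h
    have : m = 0 := by omega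
    rw [this, hC0] at hv2
    omega
  set t := Nat.findGreatest (fun t' => min (C (t' - 1)) (C t') < v) m with hT
  have hpred1 : min (C (1 - 1)) (C 1) < v := by
    rw [show (1:ℕ) - 1 = 0 from rfl, hC0, min_eq_left (Nat.zero_le _)]
    omega
  have ht1 : 1 ≤ t :=
    Nat.le_findGreatest (P := fun t' => min (C (t' - 1)) (C t') < v) hm1 hpred1
  have htm : t ≤ m := Nat.findGreatest_le m
  have hspec : min (C (t - 1)) (C t) < v :=
    Nat.findGreatest_spec (P := fun t' => min (C (t' - 1)) (C t') < v) (m := 1) hm1 hpred1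
  have hCt : v ≤ C t := by
    rcases eq_or_lt_of_le htm with heq | hlt
    · rw [heq]; exact hv2
    · have := Nat.findGreatest_is_greatest (k := t + 1)
        (P := fun t' => min (C (t' - 1)) (C t') < v) (n := m) (by omega) (by omega)
      simp only [Nat.add_sub_cancel, not_lt] at this
      exact le_trans this (min_le_left _ _)
  have hCt1 : C (t - 1) < v := by
    rcases le_total (C (t - 1)) (C t) with h | h
    · rwa [min_eq_left h] at hspec
    · rw [min_eq_right h] at hspec; omega
  have hstep := hOk.2 t ht1 (by omega)
  have hkk : v - C (t - 1) ≤ kk L t - 1 := by omega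
  have hPs : PP L t = PP L (t - 1) + kk L t := by
    have := PP_succ L (t := t - 1) (show t - 1 < L.length by omega)
    rwa [show t - 1 + 1 = t by omega] at this
  set i := PP L (t - 1) + (v - C (t - 1)) with hi
  have hiPt : i ≤ PP L t := by omega
  have htOf : tOf L i = t := tOf_eq hpos ht1 (by omega) (by omega) hiPt
  have hqv : qval L C i = v := by
    unfold qval
    rw [htOf, min_eq_left (by omega)]
    omega
  refine ⟨i, ⟨by omega, le_trans hiPt (PP_mono L htm), by omega, ?_⟩, hqv⟩
  rw [htOf, hqv]
  refine le_minR C hCt ?_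
  intro u hu1 hu2
  have := Nat.findGreatest_is_greatest (k := u)
    (P := fun t' => min (C (t' - 1)) (C t') < v) (n := m) (by omega) hu2
  simp only [not_lt] at this
  exact le_trans this (min_le_right _ _)

lemma cross_succ_low {i m : ℕ} (hi1 : 1 ≤ i) (hi : i ≤ PP L m) :
    Cross L C i (m + 1) ↔ Cross L C i m ∧ qval L C i ≤ C (m + 1) := by
  have htle : tOf L i ≤ m := by
    have := tOf_spec1 (L := L) hi1
    have := lt_of_PP_lt_PP (L := L) (lt_of_lt_of_le this hi)
    omega
  constructor
  · rintro ⟨h1, h2, h3, h4⟩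
    rw [minR_succ C htle] at h4
    exact ⟨⟨h1, hi, htle, le_trans h4 (min_le_left _ _)⟩,
      le_trans h4 (min_le_right _ _)⟩
  · rintro ⟨⟨h1, h2, h3, h4⟩, h5⟩
    refine ⟨h1, le_trans hi (PP_mono L (by omega)), by omega, ?_⟩
    rw [minR_succ C htle]
    exact le_min h4 h5

lemma cross_succ_high (hpos : ∀ k ∈ L, 0 < k) {i m : ℕ} (h1 : PP L m < i)
    (h2 : i ≤ PP L (m + 1)) (hm : m + 2 ≤ L.length) :
    Cross L C i (m + 1) ↔ (C m < C (m + 1) ∧ i ≤ PP L m + (C (m + 1) - C m)) := by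
  have htOf : tOf L i = m + 1 := tOf_eq hpos (by omega) (by omega) (by simpa using h1) h2
  constructor
  · rintro ⟨g1, g2, g3, g4⟩
    rw [htOf, minR_self] at g4
    unfold qval at g4
    rw [htOf] at g4
    simp only [Nat.add_sub_cancel] at g4
    rcases le_total (C (m + 1)) (C m) with h | h
    · rw [min_eq_right h] at g4
      omega
    · rw [min_eq_left h] at g4
      constructor
      · by_contra hc
        have : C m = C (m + 1) := by omega
        omega
      · omega
  · rintro ⟨g1, g2⟩
    refine ⟨by omega, h2, by omega, ?_⟩
    rw [htOf, minR_self]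
    unfold qval
    rw [htOf]
    simp only [Nat.add_sub_cancel]
    rw [min_eq_left (by omega)]
    omega

section Abstract

variable {O : ℕ → ℕ → Prop} (hO : IsTransferSystem L.sum O)
  (hcore : coreTS L.sum O = concatCompletes L)
  (hpos : ∀ k ∈ L, 0 < k)

include hO hcore hpos

omit hcore hpos in
lemma card_XS_eq {m : ℕ} (hm : m + 1 ≤ L.length) : (XS L O m).card = Phi L O m := by
  unfold Phi
  split
  · rfl
  · next h =>
    have : m = 0 := by omega
    rw [this, XS_zero]
    rfl

/-- Main uniqueness induction: the crossing sets are the explicit ones. -/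
lemma xs_eq_es : ∀ m, m + 1 ≤ L.length → XS L O m = ES L (Phi L O) m := by
  obtain ⟨hC0, hOk⟩ := ok_Phi hO hcore hpos
  set C := Phi L O with hCdef
  intro m
  induction m with
  | zero =>
    intro _
    rw [XS_zero]
    refine (Finset.eq_empty_iff_forall_notMem.mpr ?_).symm
    intro i hi
    have h := (mem_ES.mp hi).2.2.1
    have := tOf_pos L i
    omega
  | succ m ih =>
    intro hm
    have hmlen : m + 1 ≤ L.length := by omega
    have hES := ih hmlen
    have hCm : (XS L O m).card = C m := card_XS_eq hO hmlen
    have hCm1 : (XS L O (m + 1)).card = C (m + 1) := card_XS_eq hO hm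
    have hEcard : (ES L C m).card = C m := card_ES hpos hC0 hOk hmlen
    have hinj : ∀ a b, Cross L C a m → Cross L C b m → qval L C a = qval L C b → a = b := by
      intro a b ha hb heq
      by_contra hne
      rcases Nat.lt_or_ge a b with h | h
      · exact absurd heq (Nat.ne_of_lt (qval_lt ha hb h))
      · exact absurd heq.symm (Nat.ne_of_lt (qval_lt hb ha (by omega)))
    by_cases hcase : C (m + 1) ≤ C m
    · -- no new crossing arrows in block m+1
      have hB1 : ∀ j ∈ XS L O (m + 1), j ≤ PP L m := by
        intro j hj
        by_contra hc
        push_neg at hc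
        have hsubm : XS L O m ⊆ XS L O (m + 1) := by
          intro i hi
          exact xs_star hO hcore hpos hm hi hj
            (le_trans (mem_XS.mp hi).2.1 (by omega))
        have hjn : j ∉ XS L O m := by
          intro hjm
          exact absurd (mem_XS.mp hjm).2.1 (by omega)
        have : XS L O m ∪ {j} ⊆ XS L O (m + 1) := by
          intro x hx
          rcases Finset.mem_union.mp hx with h | h
          · exact hsubm h
          · rwa [Finset.mem_singleton.mp h]
        have hcard := Finset.card_le_card this
        rw [Finset.card_union_of_disjoint (by simpa using hjn)] at hcard
        simp at hcard
        omega
      have hsub : XS L O (m + 1) ⊆ XS L O m := fun j hj =>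
        XS_restrict hO hj (by omega) (hB1 j hj)
      classical
      set S : Finset ℕ := (XS L O (m + 1)).image (qval L C) with hS
      have hinjOn : Set.InjOn (qval L C) (XS L O (m + 1)) := by
        intro a ha b hb heq
        have ha' := mem_ES.mp (hES ▸ hsub ha)
        have hb' := mem_ES.mp (hES ▸ hsub hb)
        exact hinj a b ha' hb' heq
      have hScard : S.card = C (m + 1) := by
        rw [hS, Finset.card_image_of_injOn hinjOn, hCm1]
      have hSsub : S ⊆ Finset.Icc 1 (C m) := by
        intro v hv
        obtain ⟨i, hi, rfl⟩ := Finset.mem_image.mp hv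
        have hc := mem_ES.mp (hES ▸ hsub hi)
        have := qval_bounds hc
        exact Finset.mem_Icc.mpr ⟨this.1, this.2⟩
      have hSlow : ∀ x ∈ S, ∀ y, 0 + 1 ≤ y → y ≤ x → y ∈ S := by
        intro x hx y hy1 hy2
        obtain ⟨i, hi, rfl⟩ := Finset.mem_image.mp hx
        have hxC : y ≤ C m := by
          have := Finset.mem_Icc.mp (hSsub hx)
          omega
        obtain ⟨i', hc', hq'⟩ := qval_surj hpos hC0 hOk hmlen (by omega) hxC
        have hi'mem : i' ∈ XS L O m := hES ▸ mem_ES.mpr hc'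
        have hii : i' ≤ i := by
          by_contra hcc
          push_neg at hcc
          have hci := mem_ES.mp (hES ▸ hsub hi)
          have := qval_lt hci hc' hcc
          omega
        have : i' ∈ XS L O (m + 1) := xs_star hO hcore hpos hm hi'mem hi hii
        exact Finset.mem_image.mpr ⟨i', this, hq'⟩
      have hSlow' := lower_eq (a := 0) (by simpa using hSsub) hSlow
      rw [hScard] at hSlow'
      simp only [Nat.zero_add] at hSlow'
      ext i
      constructor
      · intro hi
        have hcm := mem_ES.mp (hES ▸ hsub hi)
        have hqS : qval L C i ∈ S := Finset.mem_image.mpr ⟨i, hi, rfl⟩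
        rw [hSlow'] at hqS
        have hqle := (Finset.mem_Icc.mp hqS).2
        exact mem_ES.mpr ((cross_succ_low hcm.1 (hB1 i hi)).mpr ⟨hcm, hqle⟩)
      · intro hi
        have hc := mem_ES.mp hi
        rcases le_or_gt i (PP L m) with hle | hgt
        · have hlow := (cross_succ_low hc.1 hle).mp hc
          have hqmem : qval L C i ∈ Finset.Icc 1 (C (m + 1)) :=
            Finset.mem_Icc.mpr ⟨(qval_bounds hlow.1).1, hlow.2⟩
          rw [← hSlow'] at hqmem
          obtain ⟨i'', hi'', hq''⟩ := Finset.mem_image.mp hqmem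
          have hci'' := mem_ES.mp (hES ▸ hsub hi'')
          have : i'' = i := hinj i'' i hci'' hlow.1 hq''
          rwa [← this]
        · have := (cross_succ_high hpos hgt hc.2.1 hm).mp hc
          omega
    · -- new crossing arrows appear in block m+1
      push_neg at hcase
      classical
      set B1 : Finset ℕ := (XS L O (m + 1)).filter (fun j => PP L m < j) with hB1def
      have hB1ne : B1.Nonempty := by
        rw [Finset.filter_nonempty_iff]
        by_contra hc
        push_neg at hc
        have hsub : XS L O (m + 1) ⊆ XS L O m := fun j hj =>
          XS_restrict hO hj (by omega) (hc j hj)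
        have := Finset.card_le_card hsub
        omega
      obtain ⟨j0, hj0⟩ := hB1ne
      have hj0X : j0 ∈ XS L O (m + 1) := (Finset.mem_filter.mp hj0).1
      have hj0gt : PP L m < j0 := (Finset.mem_filter.mp hj0).2
      have hXsub : XS L O m ⊆ XS L O (m + 1) := by
        intro i hi
        exact xs_star hO hcore hpos hm hi hj0X (le_trans (mem_XS.mp hi).2.1 (by omega))
      have hA1 : (XS L O (m + 1)).filter (fun j => ¬ PP L m < j) = XS L O m := by
        ext i
        rw [Finset.mem_filter]
        constructor
        · rintro ⟨h1, h2⟩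
          exact XS_restrict hO h1 (by omega) (by omega)
        · intro h1
          exact ⟨hXsub h1, by have := (mem_XS.mp h1).2.1; omega⟩
      have hXeq : XS L O (m + 1) = XS L O m ∪ B1 := by
        ext i
        rw [Finset.mem_union]
        constructor
        · intro h
          rcases le_or_gt i (PP L m) with h1 | h1
          · exact Or.inl (XS_restrict hO h (by omega) h1)
          · exact Or.inr (Finset.mem_filter.mpr ⟨h, h1⟩)
        · rintro (h | h)
          · exact hXsub h
          · exact (Finset.mem_filter.mp h).1
      have hdisj : Disjoint (XS L O m) B1 := by
        rw [Finset.disjoint_left]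
        intro a ha hb
        have h1 := (mem_XS.mp ha).2.1
        have h2 := (Finset.mem_filter.mp hb).2
        omega
      have hcardsplit : C m + B1.card = C (m + 1) := by
        have := Finset.card_union_of_disjoint hdisj
        rw [← hXeq] at this
        omega
      have hB1sub : B1 ⊆ Finset.Icc (PP L m + 1) (PP L (m + 1)) := by
        intro j hj
        have h1 := (Finset.mem_filter.mp hj).2
        have h2 := (mem_XS.mp (Finset.mem_filter.mp hj).1).2.1
        exact Finset.mem_Icc.mpr ⟨by omega, h2⟩
      have hB1low : ∀ x ∈ B1, ∀ y, PP L m + 1 ≤ y → y ≤ x → y ∈ B1 := by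
        intro x hx y hy1 hy2
        have hxX := (Finset.mem_filter.mp hx).1
        have : y ∈ XS L O (m + 1) :=
          xs_block_lower hO hcore hpos hxX (by simpa using (by omega : PP L m < y)) hy2
        exact Finset.mem_filter.mpr ⟨this, by omega⟩
      have hB1eq : B1 = Finset.Icc (PP L m + 1) (PP L m + B1.card) :=
        lower_eq hB1sub hB1low
      ext i
      rw [hXeq, Finset.mem_union]
      constructor
      · rintro (h | h)
        · have hc := mem_ES.mp (hES ▸ h)
          refine mem_ES.mpr ((cross_succ_low hc.1 hc.2.1).mpr ⟨hc, ?_⟩)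
          have := (qval_bounds hc).2
          omega
        · rw [hB1eq] at h
          have hIc := Finset.mem_Icc.mp h
          have hstep2 : C (m + 1) + 1 ≤ C m + kk L (m + 1) := by
            have := hOk.2 (m + 1) (by omega) (by omega)
            simpa using this
          have hPs2 : PP L (m + 1) = PP L m + kk L (m + 1) := PP_succ L (by omega)
          exact mem_ES.mpr ((cross_succ_high hpos (by omega) (by omega) hm).mpr
            ⟨hcase, by omega⟩)
      · intro h
        have hc := mem_ES.mp h
        rcases le_or_gt i (PP L m) with h1 | h1
        · left
          have := (cross_succ_low hc.1 h1).mp hc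
          exact hES ▸ mem_ES.mpr this.1
        · right
          have := (cross_succ_high hpos h1 hc.2.1 hm).mp hc
          rw [hB1eq]
          exact Finset.mem_Icc.mpr ⟨by omega, by omega⟩

/-- Round trip: the transfer system is recovered from its crossing vector. -/
lemma o_eq_rel : O = Rel L (Phi L O) := by
  funext i j
  apply propext
  constructor
  · intro hOij
    obtain ⟨h1, h2, h3⟩ := hO.2.2.1 i j hOij
    refine ⟨h1, h2, h3, ?_⟩
    intro m hm1 hm2 him hml
    have hXm : i ∈ XS L O m := mem_XS.mpr ⟨h1, him,
      hO.2.2.2 i j (PP L m + 1) hOij (by omega) (by omega)⟩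
    exact mem_ES.mp (xs_eq_es hO hcore hpos m hm2 ▸ hXm)
  · rintro ⟨h1, h2, h3, h4⟩
    have key : ∀ n, i + n ≤ j → O i (i + n) := by
      intro n
      induction n with
      | zero => intro _; exact hO.1 i h1 (by omega)
      | succ n ih =>
        intro hn
        by_cases hbp : ∃ t, 1 ≤ t ∧ t + 1 ≤ L.length ∧ PP L t = i + n
        · obtain ⟨t, ht1, ht2, ht3⟩ := hbp
          have hcr : Cross L (Phi L O) i t := h4 t ht1 ht2 (by omega) (by omega)
          have : i ∈ XS L O t := by
            rw [xs_eq_es hO hcore hpos t ht2]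
            exact mem_ES.mpr hcr
          have := (mem_XS.mp this).2.2
          rwa [ht3] at this
        · push_neg at hbp
          have hstep : O (i + n) (i + n + 1) := by
            refine (o_succ_iff hO hcore hpos (by omega) (by omega)).mpr ?_
            intro t ht1 ht2
            exact hbp t ht1 ht2
          exact hO.2.1 i (i + n) (i + n + 1) (ih (by omega)) hstep
    have := key (j - i) (by omega)
    rwa [show i + (j - i) = j by omega] at this

end Abstract

/-- Round trip: the crossing vector is recovered from the transfer system. -/
lemma phi_rel (hpos : ∀ k ∈ L, 0 < k) (hC0 : C 0 = 0) (hOk : Ok L C) :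
    Phi L (Rel L C) = C := by
  funext m
  unfold Phi
  split
  · next hm =>
    obtain ⟨hm1, hm2⟩ := hm
    have hXE : XS L (Rel L C) m = ES L C m := by
      ext i
      rw [mem_XS, mem_ES]
      constructor
      · rintro ⟨h1, h2, h3⟩
        exact h3.2.2.2 m hm1 hm2 h2 (by omega)
      · intro hc
        obtain ⟨h1, h2, h3, h4⟩ := hc
        refine ⟨h1, h2, ?_⟩
        have hPmK : PP L m < L.sum := by
          have := PP_lt_PP hpos (show m < L.length by omega) le_rfl
          rwa [PP_len] at this
        refine ⟨h1, by omega, by omega, ?_⟩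
        intro m' hm'1 hm'2 him' hlt'
        have hm'm : m' ≤ m := by
          by_contra hcc
          push_neg at hcc
          have := PP_lt_PP hpos hcc (by omega)
          omega
        have htle : tOf L i ≤ m' := by
          have := tOf_spec1 (L := L) h1
          have := lt_of_PP_lt_PP (L := L) (lt_of_lt_of_le this him')
          omega
        exact cross_restrict ⟨h1, h2, h3, h4⟩ htle hm'm
    rw [hXE]
    exact card_ES hpos hC0 hOk hm2
  · next hm =>
    rcases Nat.lt_or_ge m 1 with h | h
    · have : m = 0 := by omega
      rw [this, hC0]
    · exact (hOk.1 m (by omega)).symm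

end TS19

namespace TS19

/-- The middle type: valid crossing vectors. -/
def MSet (L : List ℕ) : Type := {C : ℕ → ℕ // C 0 = 0 ∧ Ok L C}

/-- Part A equivalence: transfer systems with prescribed core ≃ crossing vectors. -/
noncomputable def equivA {L : List ℕ} (hpos : ∀ k ∈ L, 0 < k) :
    {O : ℕ → ℕ → Prop //
      IsTransferSystem L.sum O ∧ coreTS L.sum O = concatCompletes L} ≃ MSet L where
  toFun O := ⟨Phi L O.1, ok_Phi O.2.1 O.2.2 hpos⟩
  invFun C := ⟨Rel L C.1, rel_isTS, rel_core hpos C.2.2⟩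
  left_inv O := Subtype.ext (o_eq_rel O.2.1 O.2.2 hpos).symm
  right_inv C := Subtype.ext (phi_rel hpos C.2.1 C.2.2)

/-! ### Part B: Catalan tuples from crossing vectors -/

/-- Builds the Catalan tuple with entries `ks` and zero-gaps determined by carries `C`. -/
def build2 : List ℕ → (ℕ → ℕ) → List ℕ
  | [], _ => []
  | [a], _ => [a]
  | a :: b :: ks, C =>
      a :: (List.replicate (C 0 + a - 1 - C 1) 0 ++ build2 (b :: ks) (fun t => C (t + 1)))

/-- Ballot condition with initial surplus `d`. -/
def Ballot (s : List ℕ) (d : ℕ) : Prop := ∀ j < s.length, j < (s.take (j + 1)).sum + d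

lemma ballot_nil (d : ℕ) : Ballot [] d := fun j hj => absurd hj (by simp)

lemma ballot_cons {x : ℕ} {s : List ℕ} {d : ℕ} :
    Ballot (x :: s) d ↔ (0 < x + d ∧ Ballot s (x + d - 1)) := by
  constructor
  · intro h
    have h0 := h 0 (by simp)
    simp only [List.take_succ_cons, List.take_zero, List.sum_cons, List.sum_nil] at h0
    refine ⟨by omega, ?_⟩
    intro j hj
    have := h (j + 1) (by simp; omega)
    simp only [List.take_succ_cons, List.sum_cons] at this
    omega
  · rintro ⟨h0, h⟩
    intro j hj
    cases j with
    | zero => simpa using h0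
    | succ j =>
      have := h j (by simp at hj; omega)
      simp only [List.take_succ_cons, List.sum_cons]
      omega

lemma ballot_replicate {g : ℕ} {s : List ℕ} {d : ℕ} :
    Ballot (List.replicate g 0 ++ s) d ↔ (g ≤ d ∧ Ballot s (d - g)) := by
  induction g generalizing d with
  | zero => simp
  | succ g ih =>
    rw [show List.replicate (g + 1) (0:ℕ) ++ s = 0 :: (List.replicate g 0 ++ s) by
      simp [List.replicate_succ], ballot_cons, ih]
    constructor
    · rintro ⟨h1, h2, h3⟩
      refine ⟨by omega, ?_⟩
      rwa [show 0 + d - 1 - g = d - (g + 1) by omega] at h3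
    · rintro ⟨h1, h2⟩
      refine ⟨by omega, by omega, ?_⟩
      rwa [show d - (g + 1) = 0 + d - 1 - g by omega] at h2

lemma kk_cons_one (a : ℕ) (l : List ℕ) : kk (a :: l) 1 = a := rfl

lemma kk_cons_succ (a : ℕ) (l : List ℕ) {m : ℕ} (hm : 1 ≤ m) :
    kk (a :: l) (m + 1) = kk l m := by
  unfold kk
  rw [show m + 1 - 1 = (m - 1) + 1 by omega, List.getD_cons_succ]

/-- Shift of validity. -/
lemma ok_shift {a : ℕ} {ks : List ℕ} {C : ℕ → ℕ} (h : Ok (a :: ks) C) :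
    Ok ks (fun t => C (t + 1)) := by
  constructor
  · intro m hm
    exact h.1 (m + 1) (by simp; omega)
  · intro m hm1 hm2
    have := h.2 (m + 1) (by omega) (by simp; omega)
    rw [show m + 1 - 1 = m by omega, kk_cons_succ a ks hm1] at this
    have hg : m - 1 + 1 = m := by omega
    simpa [hg] using this

lemma build2_cons (a : ℕ) (ks : List ℕ) (C : ℕ → ℕ) :
    ∃ tl, build2 (a :: ks) C = a :: tl := by
  cases ks with
  | nil => exact ⟨[], rfl⟩
  | cons b ks => exact ⟨_, rfl⟩

lemma filter_replicate_zero (n : ℕ) :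
    (List.replicate n (0:ℕ)).filter (fun x => decide (x ≠ 0)) = [] := by
  induction n with
  | zero => rfl
  | succ n ih => simpa [List.replicate_succ]

lemma filter_build2 : ∀ (ks : List ℕ) (C : ℕ → ℕ), (∀ k ∈ ks, 0 < k) →
    (build2 ks C).filter (fun x => decide (x ≠ 0)) = ks
  | [], C, _ => rfl
  | [a], C, hpos => by
    have ha : a ≠ 0 := by have := hpos a (by simp); omega
    simp [build2, ha]
  | a :: b :: ks, C, hpos => by
    have ha : a ≠ 0 := by have := hpos a (by simp); omega
    have ih := filter_build2 (b :: ks) (fun t => C (t + 1))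
      (fun k hk => hpos k (List.mem_cons_of_mem a hk))
    simp only [build2, List.filter_cons, List.filter_append, filter_replicate_zero, ih,
      decide_eq_true_eq]
    simp [ha]

lemma sum_build2 : ∀ (ks : List ℕ) (C : ℕ → ℕ), (build2 ks C).sum = ks.sum
  | [], C => rfl
  | [a], C => by simp [build2]
  | a :: b :: ks, C => by
    have ih := sum_build2 (b :: ks) (fun t => C (t + 1))
    simp [build2, ih, List.sum_replicate]

lemma getLast_build2 : ∀ (ks : List ℕ) (C : ℕ → ℕ), ks ≠ [] → (∀ k ∈ ks, 0 < k) →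
    (build2 ks C).getLast? ≠ some 0
  | [], _, hne, _ => absurd rfl hne
  | [a], C, _, hpos => by
    have := hpos a (by simp)
    simp [build2]
    omega
  | a :: b :: ks, C, _, hpos => by
    have ih := getLast_build2 (b :: ks) (fun t => C (t + 1)) (by simp)
      (fun k hk => hpos k (List.mem_cons_of_mem a hk))
    obtain ⟨tl, htl⟩ := build2_cons b ks (fun t => C (t + 1))
    show (a :: (List.replicate (C 0 + a - 1 - C 1) 0 ++
      build2 (b :: ks) (fun t => C (t + 1)))).getLast? ≠ some 0
    rw [show a :: (List.replicate (C 0 + a - 1 - C 1) 0 ++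
        build2 (b :: ks) (fun t => C (t + 1)))
      = (a :: List.replicate (C 0 + a - 1 - C 1) 0) ++ build2 (b :: ks) (fun t => C (t + 1))
      from rfl, List.getLast?_append]
    rw [htl] at ih ⊢
    cases h : (b :: tl).getLast? with
    | none => simp at h
    | some v =>
      rw [h] at ih
      simpa using ih

lemma ballot_build2 : ∀ (ks : List ℕ) (C : ℕ → ℕ), (∀ k ∈ ks, 0 < k) → Ok ks C →
    Ballot (build2 ks C) (C 0)
  | [], C, _, _ => ballot_nil _
  | [a], C, hpos, _ => by
    have ha := hpos a (by simp)
    intro j hj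
    have : j = 0 := by simpa [build2] using hj
    subst this
    simp [build2]
    omega
  | a :: b :: ks, C, hpos, hOk => by
    have ha := hpos a (by simp)
    have hstep : C 1 + 1 ≤ C 0 + a := by
      have := hOk.2 1 le_rfl (by simp)
      rwa [show (1:ℕ) - 1 = 0 from rfl, kk_cons_one] at this
    have ih := ballot_build2 (b :: ks) (fun t => C (t + 1))
      (fun k hk => hpos k (List.mem_cons_of_mem a hk)) (ok_shift hOk)
    show Ballot (a :: (List.replicate (C 0 + a - 1 - C 1) 0 ++
      build2 (b :: ks) (fun t => C (t + 1)))) (C 0)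
    rw [ballot_cons, ballot_replicate]
    refine ⟨by omega, by omega, ?_⟩
    rwa [show a + C 0 - 1 - (C 0 + a - 1 - C 1) = C 1 by omega]

end TS19

namespace TS19

lemma rep_append_inj : ∀ {g g' x y : ℕ} {u v : List ℕ}, x ≠ 0 → y ≠ 0 →
    List.replicate g 0 ++ (x :: u) = List.replicate g' 0 ++ (y :: v) →
    g = g' ∧ x = y ∧ u = v := by
  intro g
  induction g with
  | zero =>
    intro g' x y u v hx hy h
    cases g' with
    | zero =>
      simp only [List.replicate, List.nil_append, List.cons.injEq] at h
      exact ⟨rfl, h.1, h.2⟩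
    | succ g' =>
      rw [List.replicate_succ] at h
      simp only [List.replicate_zero, List.nil_append, List.cons_append, List.cons.injEq] at h
      exact absurd h.1 hx
  | succ g ih =>
    intro g' x y u v hx hy h
    cases g' with
    | zero =>
      rw [List.replicate_succ] at h
      simp only [List.replicate_zero, List.nil_append, List.cons_append, List.cons.injEq] at h
      exact absurd h.1.symm hy
    | succ g' =>
      rw [List.replicate_succ, List.replicate_succ] at h
      simp only [List.cons_append, List.cons.injEq] at h
      obtain ⟨h1, h2, h3⟩ := ih hx hy h.2
      exact ⟨by omega, h2, h3⟩

lemma build2_inj : ∀ (ks : List ℕ) (C C' : ℕ → ℕ), (∀ k ∈ ks, 0 < k) →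
    Ok ks C → Ok ks C' → C 0 = C' 0 → build2 ks C = build2 ks C' → C = C'
  | [], C, C', _, hOk, hOk', h0, _ => by
    funext m
    rw [hOk.1 m (by simp), hOk'.1 m (by simp)]
  | [a], C, C', _, hOk, hOk', h0, _ => by
    funext m
    cases m with
    | zero => exact h0
    | succ m => rw [hOk.1 (m + 1) (by simp), hOk'.1 (m + 1) (by simp)]
  | a :: b :: ks, C, C', hpos, hOk, hOk', h0, heq => by
    have hb : b ≠ 0 := by have := hpos b (by simp); omega
    obtain ⟨tl, htl⟩ := build2_cons b ks (fun t => C (t + 1))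
    obtain ⟨tl', htl'⟩ := build2_cons b ks (fun t => C' (t + 1))
    simp only [build2, List.cons.injEq, htl, htl'] at heq
    obtain ⟨hg, -, htls⟩ := rep_append_inj hb hb heq.2
    have hC1b : C 1 + 1 ≤ C 0 + a := by
      have := hOk.2 1 le_rfl (by simp)
      rwa [show (1:ℕ) - 1 = 0 from rfl, kk_cons_one] at this
    have hC1b' : C' 1 + 1 ≤ C' 0 + a := by
      have := hOk'.2 1 le_rfl (by simp)
      rwa [show (1:ℕ) - 1 = 0 from rfl, kk_cons_one] at this
    have hC1 : C 1 = C' 1 := by omega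
    have ihres : (fun t => C (t + 1)) = (fun t => C' (t + 1)) := by
      refine build2_inj (b :: ks) _ _ (fun k hk => hpos k (List.mem_cons_of_mem a hk))
        (ok_shift hOk) (ok_shift hOk') hC1 ?_
      rw [htl, htl', htls]
    funext m
    cases m with
    | zero => exact h0
    | succ m => exact congrFun ihres m

lemma zsplit : ∀ (u : List ℕ), ∃ g u', u = List.replicate g 0 ++ u' ∧
    ∀ x, u'.head? = some x → x ≠ 0
  | [] => ⟨0, [], rfl, by simp⟩
  | y :: v => by
    by_cases hy : y = 0
    · obtain ⟨g, u', h1, h2⟩ := zsplit v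
      refine ⟨g + 1, u', ?_, h2⟩
      rw [List.replicate_succ, hy]
      simp [h1]
    · exact ⟨0, y :: v, rfl, by intro x hx; simp at hx; omega⟩

lemma parse : ∀ (ks : List ℕ), (∀ k ∈ ks, 0 < k) → ks ≠ [] → ∀ (s : List ℕ) (d : ℕ),
    s.filter (fun x => decide (x ≠ 0)) = ks → s.getLast? ≠ some 0 →
    (∀ x, s.head? = some x → x ≠ 0) → Ballot s d →
    ∃ C : ℕ → ℕ, C 0 = d ∧ Ok ks C ∧ s = build2 ks C := by
  intro ks
  induction ks with
  | nil => intro _ hne; exact absurd rfl hne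
  | cons a ks' IH =>
    intro hpos _ s d hfil hlast hhead hb
    obtain ⟨x, u, rfl⟩ : ∃ x u, s = x :: u := by
      cases s with
      | nil => simp at hfil
      | cons x u => exact ⟨x, u, rfl⟩
    have hx : x ≠ 0 := hhead x rfl
    rw [List.filter_cons_of_pos (by simpa using hx)] at hfil
    obtain ⟨rfl, hfilu⟩ : x = a ∧ u.filter (fun x => decide (x ≠ 0)) = ks' := by
      simpa using hfil
    rw [ballot_cons] at hb
    obtain ⟨hxd, hbu⟩ := hb
    cases ks' with
    | nil =>
      have hu0 : ∀ y ∈ u, y = 0 := by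
        intro y hy
        have := List.filter_eq_nil_iff.mp hfilu y hy
        simpa using this
      have hu : u = [] := by
        cases u with
        | nil => rfl
        | cons y v =>
          exfalso
          have h1 : (x :: y :: v).getLast? = (y :: v).getLast? := List.getLast?_cons_cons
          have h2 : (y :: v).getLast? = some ((y :: v).getLast (by simp)) :=
            List.getLast?_eq_getLast _
          have h3 : (y :: v).getLast (by simp) ∈ y :: v := List.getLast_mem _
          have h4 := hu0 _ h3
          rw [h1, h2, h4] at hlast
          exact hlast rfl
      subst hu
      refine ⟨fun m => if m = 0 then d else 0, by simp, ⟨?_, ?_⟩, by simp [build2]⟩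
      · intro m hm
        simp only [List.length_cons, List.length_nil] at hm
        show (if m = 0 then d else 0) = 0
        rw [if_neg (by omega)]
      · intro m hm1 hm2
        exfalso
        simp only [List.length_cons, List.length_nil] at hm2
        omega
    | cons b ks'' =>
      obtain ⟨g, u', hu, hu'head⟩ := zsplit u
      have hfil' : u'.filter (fun x => decide (x ≠ 0)) = b :: ks'' := by
        rw [hu, List.filter_append, filter_replicate_zero] at hfilu
        simpa using hfilu
      have hu'ne : u' ≠ [] := by
        intro h
        rw [h] at hfil'
        simp at hfil'
      have hlast' : u'.getLast? ≠ some 0 := by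
        intro h
        apply hlast
        rw [hu, show x :: (List.replicate g 0 ++ u') = (x :: List.replicate g 0) ++ u'
          from rfl, List.getLast?_append, h]
        rfl
      rw [hu, ballot_replicate] at hbu
      obtain ⟨hgd, hbu'⟩ := hbu
      obtain ⟨C', hC'0, hOk', hu'eq⟩ := IH (fun k hk => hpos k (List.mem_cons_of_mem x hk))
        (by simp) u' (x + d - 1 - g) hfil' hlast' hu'head hbu'
      refine ⟨fun m => Nat.casesOn m d C', rfl, ⟨?_, ?_⟩, ?_⟩
      · intro m hm
        cases m with
        | zero => simp at hm
        | succ m' =>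
          exact hOk'.1 m' (by simp at hm ⊢; omega)
      · intro m hm1 hm2
        cases m with
        | zero => omega
        | succ m' =>
          cases m' with
          | zero =>
            show C' 0 + 1 ≤ d + kk (x :: b :: ks'') 1
            rw [kk_cons_one, hC'0]
            omega
          | succ m'' =>
            show C' (m'' + 1) + 1 ≤ C' m'' + kk (x :: b :: ks'') (m'' + 1 + 1)
            rw [kk_cons_succ x (b :: ks'') (by omega)]
            have := hOk'.2 (m'' + 1) (by omega) (by simp at hm2 ⊢; omega)
            simpa using this
      · show x :: u = build2 (x :: b :: ks'') (fun m => Nat.casesOn m d C')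
        have hgv : d + x - 1 - C' 0 = g := by rw [hC'0]; omega
        rw [show build2 (x :: b :: ks'') (fun m => Nat.casesOn m d C') =
          x :: (List.replicate (d + x - 1 - C' 0) 0 ++ build2 (b :: ks'') C') from rfl,
          ← hu'eq, hgv, hu]


/-- Part B equivalence: crossing vectors ≃ Catalan tuples with prescribed nonzero part. -/
noncomputable def equivB {L : List ℕ} (hpos : ∀ k ∈ L, 0 < k) (hne : L ≠ []) :
    MSet L ≃ {s : List ℕ //
      IsCatalanTuple L.sum s ∧ s.filter (fun x => decide (x ≠ 0)) = L} := by
  apply Equiv.ofBijective (fun C => (⟨build2 L C.1,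
    ⟨?_, ?_, sum_build2 L C.1, fun _ => getLast_build2 L C.1 hne hpos⟩,
    filter_build2 L C.1 hpos⟩ :
      {s : List ℕ // IsCatalanTuple L.sum s ∧ s.filter (fun x => decide (x ≠ 0)) = L}))
  rotate_left
  · -- nonempty
    intro h
    apply hne
    have := filter_build2 L C.1 hpos
    rw [h] at this
    exact this.symm
  · -- ballot
    intro j hj
    have := ballot_build2 L C.1 hpos C.2.2 j hj
    rw [C.2.1] at this
    simpa using this
  constructor
  · intro C C' h
    have heq := Subtype.ext_iff.mp h
    simp only at heq
    exact Subtype.ext (build2_inj L C.1 C'.1 hpos C.2.2 C'.2.2 (C.2.1.trans C'.2.1.symm) heq)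
  · rintro ⟨s, hcat, hfil⟩
    have hKpos : 0 < L.sum := by
      cases L with
      | nil => exact absurd rfl hne
      | cons a ks =>
        have := hpos a (by simp)
        simp only [List.sum_cons]
        omega
    have hnes : s ≠ [] := by
      intro h
      rw [h] at hfil
      exact hne hfil.symm
    have hlast := hcat.2.2.2 hKpos
    have hballot : Ballot s 0 := by
      intro j hj
      have := hcat.2.1 j hj
      omega
    have hhead : ∀ x, s.head? = some x → x ≠ 0 := by
      cases s with
      | nil => exact absurd rfl hnes
      | cons y v =>
        intro x hx
        simp only [List.head?_cons, Option.some.injEq] at hx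
        subst hx
        have := hcat.2.1 0 (by simp)
        simp at this
        omega
    obtain ⟨C, hC0, hOk, hs⟩ := parse L hpos hne s 0 hfil hlast hhead hballot
    exact ⟨⟨C, hC0, hOk⟩, Subtype.ext hs.symm⟩

end TS19


/-- For positive integers `k_1, …, k_r` with sum `K`, the number of
transfer systems on `[K]` with core `O_{k_1}^cpt ⊕ … ⊕ O_{k_r}^cpt` equals the number
of Catalan tuples of length `K` whose subsequence of nonzero entries is `(k_1, …, k_r)`. -/
theorem count_fixed_core_eq_catalanTuples (L : List ℕ) (hLne : L ≠ [])
    (hLpos : ∀ k ∈ L, 0 < k) (K : ℕ) (hK : L.sum = K) :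
    Nat.card {O : ℕ → ℕ → Prop //
      IsTransferSystem K O ∧ coreTS K O = concatCompletes L} =
    Nat.card {s : List ℕ //
      IsCatalanTuple K s ∧ s.filter (fun x => decide (x ≠ 0)) = L} := by
  subst hK
  exact Nat.card_congr ((TS19.equivA hLpos).trans (TS19.equivB hLpos hLne))
end
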